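/- arXiv:2212.13315 — 6 statements merged into one kernel-verified Lean document; each statement's English description precedes it below -/
import Mathlib

section
/- Let p be a prime and let K be a perfectoid field of characteristic 0 with residue characteristic p and ring of integers O_K. Then the localization away from p of the p-adic completion of the monoid algebra O_K[x^{1/p^∞}] — that is, the perfectoid Tate algebra K⟨x^{1/p^∞}⟩ over the field K — admits a family (𝔭_λ)_{λ∈(0,1)} of prime ideals, indexed by the real interval (0,1), with 𝔭_λ ⊊ 𝔭_μ whenever λ < μ; in particular it has uncountable Krull dimension. -/
set_option synthInstance.maxHeartbeats 1000000
set_option maxHeartbeats 1000000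

/-- The additive monoid of nonnegative rationals with `p`-power denominator. -/
def pPowRat (p : ℕ) : AddSubmonoid ℚ where
  carrier := {q : ℚ | 0 ≤ q ∧ ∃ (n : ℕ) (m : ℤ), (p : ℚ) ^ n * q = (m : ℚ)}
  zero_mem' := ⟨le_rfl, 0, 0, by simp⟩
  add_mem' := by
    rintro a b ⟨ha, n, m, hm⟩ ⟨hb, n', m', hm'⟩
    refine ⟨add_nonneg ha hb, n + n', m * (p : ℤ) ^ n' + m' * (p : ℤ) ^ n, ?_⟩
    push_cast
    rw [← hm, ← hm']
    ring

/-- view an element of the monoid algebra as its coefficient function -/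
instance instCoeFunAMA {R M : Type*} [Semiring R] :
    CoeFun (AddMonoidAlgebra R M) (fun _ => M → R) := ⟨fun f => f.coeff⟩

/-- support of an element of the monoid algebra -/
abbrev AddMonoidAlgebra.support {R M : Type*} [Semiring R] (f : AddMonoidAlgebra R M) :
    Finset M := f.coeff.support

namespace PTA3

variable {K : Type} [Field K]

section gn

variable (v : Valuation K NNReal) (p : ℕ)

/-- the weight of the exponent `q` at radius index `k` -/
noncomputable def rq (k : ℕ) (q : pPowRat p) : NNReal :=
  v (p : K) ^ (((q : ℚ) : ℝ) * k)

/-- Gauss norm at radius index `k` on the monoid algebra. -/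
noncomputable def gn (k : ℕ) (f : AddMonoidAlgebra v.integer (pPowRat p)) : NNReal :=
  f.support.sup fun q => v (f q : K) * rq v p k q

variable {v p}

lemma rq_add (hp0 : v (p : K) ≠ 0) (k : ℕ) (q q' : pPowRat p) :
    rq v p k (q + q') = rq v p k q * rq v p k q' := by
  unfold rq
  rw [← NNReal.rpow_add hp0]
  congr 1
  push_cast
  ring

lemma rq_pos (hp0 : 0 < v (p : K)) (k : ℕ) (q : pPowRat p) : 0 < rq v p k q :=
  NNReal.rpow_pos hp0

lemma rq_le_one (hp1 : v (p : K) ≤ 1) (k : ℕ) (q : pPowRat p) : rq v p k q ≤ 1 := by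
  unfold rq
  exact NNReal.rpow_le_one hp1 (mul_nonneg (by exact_mod_cast q.2.1) (Nat.cast_nonneg k))

lemma term_le_gn (k : ℕ) (f : AddMonoidAlgebra v.integer (pPowRat p)) (q : pPowRat p) :
    v (f q : K) * rq v p k q ≤ gn v p k f := by
  by_cases h : q ∈ f.support
  · exact Finset.le_sup (f := fun q => v ((f q : v.integer) : K) * rq v p k q) h
  · have : f q = 0 := Finsupp.notMem_support_iff.mp h
    simp [this]

lemma gn_le {k : ℕ} {f : AddMonoidAlgebra v.integer (pPowRat p)} {b : NNReal}
    (hb : ∀ q ∈ f.support, v (f q : K) * rq v p k q ≤ b) : gn v p k f ≤ b := by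
  unfold gn; exact Finset.sup_le hb

@[simp] lemma gn_zero (k : ℕ) : gn v p k (0 : AddMonoidAlgebra v.integer (pPowRat p)) = 0 := by
  simp [gn]

lemma gn_le_one (hp1 : v (p : K) ≤ 1) (k : ℕ) (f : AddMonoidAlgebra v.integer (pPowRat p)) :
    gn v p k f ≤ 1 :=
  gn_le fun q _ => by
    calc v (f q : K) * rq v p k q ≤ 1 * 1 :=
          mul_le_mul' ((f q).2 : v ((f q : K)) ≤ 1) (rq_le_one hp1 k q)
      _ = 1 := mul_one 1

lemma gn_ne_zero_iff (hp0 : 0 < v (p : K)) {k : ℕ}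
    {f : AddMonoidAlgebra v.integer (pPowRat p)} : f ≠ 0 → gn v p k f ≠ 0 := by
  intro hf
  obtain ⟨q, hq⟩ := Finsupp.support_nonempty_iff.mpr (mt AddMonoidAlgebra.coeff_eq_zero.mp hf)
  have h1 : f q ≠ 0 := Finsupp.mem_support_iff.mp hq
  have h2 : ((f q : K)) ≠ 0 := by
    simpa using fun h => h1 (Subtype.ext h)
  have : 0 < v (f q : K) * rq v p k q :=
    mul_pos (by rwa [pos_iff_ne_zero, Valuation.ne_zero_iff]) (rq_pos hp0 k q)
  exact fun h0 => by
    have := lt_of_lt_of_le this (term_le_gn k f q)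
    simp [h0] at this

lemma gn_neg (k : ℕ) (f : AddMonoidAlgebra v.integer (pPowRat p)) :
    gn v p k (-f) = gn v p k f := by
  unfold gn
  rw [show (-f).support = f.support from Finsupp.support_neg _]
  congr 1
  ext q
  have : ((-f) q : K) = -(f q : K) := by
    rw [AddMonoidAlgebra.coeff_neg, Finsupp.neg_apply]; push_cast; ring
  rw [this, Valuation.map_neg]

lemma gn_add_le (k : ℕ) (f g : AddMonoidAlgebra v.integer (pPowRat p)) :
    gn v p k (f + g) ≤ max (gn v p k f) (gn v p k g) :=
  gn_le fun q _ => by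
    have h1 : ((f + g) q : K) = (f q : K) + (g q : K) := by
      rw [AddMonoidAlgebra.coeff_add, Finsupp.add_apply]; push_cast; ring
    have h2 : v ((f + g) q : K) ≤ max (v (f q : K)) (v (g q : K)) := by
      rw [h1]; exact v.map_add _ _
    calc v ((f + g) q : K) * rq v p k q
        ≤ max (v (f q : K)) (v (g q : K)) * rq v p k q := mul_le_mul_left h2 _
      _ = max (v (f q : K) * rq v p k q) (v (g q : K) * rq v p k q) := max_mul_of_nonneg _ _ (zero_le)
      _ ≤ max (gn v p k f) (gn v p k g) := max_le_max (term_le_gn k f q) (term_le_gn k g q)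

end gn


section gmul

variable {v : Valuation K NNReal} {p : ℕ}

lemma coe_mul_apply (f g : AddMonoidAlgebra v.integer (pPowRat p)) (s : pPowRat p) :
    (((f * g) s : v.integer) : K) =
      ∑ q ∈ f.support, ∑ q' ∈ g.support,
        if q + q' = s then ((f q : K) * (g q' : K)) else 0 := by
  rw [AddMonoidAlgebra.mul_apply]
  simp only [Finsupp.sum]
  push_cast [apply_ite (fun (x : v.integer) => (x : K))]
  rfl

lemma gn_mul_le (hp0 : v (p : K) ≠ 0) (k : ℕ) (f g : AddMonoidAlgebra v.integer (pPowRat p)) :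
    gn v p k (f * g) ≤ gn v p k f * gn v p k g := by
  apply gn_le
  intro s _
  have hρ : rq v p k s ≠ 0 := (rq_pos (pos_iff_ne_zero.mpr hp0) k s).ne'
  rw [← le_div_iff₀ (pos_iff_ne_zero.mpr hρ)]
  rw [coe_mul_apply]
  apply Valuation.map_sum_le
  intro q hq
  apply Valuation.map_sum_le
  intro q' hq'
  by_cases hcond : q + q' = s
  · rw [if_pos hcond, v.map_mul, le_div_iff₀ (pos_iff_ne_zero.mpr hρ)]
    calc v (f q : K) * v (g q' : K) * rq v p k s
        = (v (f q : K) * rq v p k q) * (v (g q' : K) * rq v p k q') := by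
          rw [← hcond, rq_add hp0]; ring
      _ ≤ gn v p k f * gn v p k g := mul_le_mul' (term_le_gn k f q) (term_le_gn k g q')
  · rw [if_neg hcond]
    simp

lemma gn_mul (hp0 : 0 < v (p : K)) (k : ℕ) {f g : AddMonoidAlgebra v.integer (pPowRat p)}
    (hf : f ≠ 0) (hg : g ≠ 0) :
    gn v p k (f * g) = gn v p k f * gn v p k g := by
  refine le_antisymm (gn_mul_le hp0.ne' k f g) ?_
  have hgnf : 0 < gn v p k f := pos_iff_ne_zero.mpr (gn_ne_zero_iff hp0 hf)
  have hgng : 0 < gn v p k g := pos_iff_ne_zero.mpr (gn_ne_zero_iff hp0 hg)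
  -- the set of maximizers
  set tf : pPowRat p → NNReal := fun q => v (f q : K) * rq v p k q with htf
  set tg : pPowRat p → NNReal := fun q => v (g q : K) * rq v p k q with htg
  have hsupf : f.support.Nonempty := Finsupp.support_nonempty_iff.mpr (mt AddMonoidAlgebra.coeff_eq_zero.mp hf)
  have hsupg : g.support.Nonempty := Finsupp.support_nonempty_iff.mpr (mt AddMonoidAlgebra.coeff_eq_zero.mp hg)
  obtain ⟨bf, hbf, hbf_eq⟩ := Finset.exists_mem_eq_sup f.support hsupf tf
  obtain ⟨bg, hbg, hbg_eq⟩ := Finset.exists_mem_eq_sup g.support hsupg tg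
  have hgf_eq : gn v p k f = f.support.sup tf := rfl
  have hgg_eq : gn v p k g = g.support.sup tg := rfl
  set Tf := f.support.filter (fun q => tf q = gn v p k f) with hTf
  set Tg := g.support.filter (fun q => tg q = gn v p k g) with hTg
  have hTf_ne : Tf.Nonempty := ⟨bf, Finset.mem_filter.mpr ⟨hbf, by rw [hgf_eq, hbf_eq]⟩⟩
  have hTg_ne : Tg.Nonempty := ⟨bg, Finset.mem_filter.mpr ⟨hbg, by rw [hgg_eq, hbg_eq]⟩⟩
  set q0 := Tf.max' hTf_ne with hq0
  set q1 := Tg.max' hTg_ne with hq1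
  have hq0f : q0 ∈ Tf := Tf.max'_mem hTf_ne
  have hq1g : q1 ∈ Tg := Tg.max'_mem hTg_ne
  have hq0mem : q0 ∈ f.support := (Finset.mem_filter.mp hq0f).1
  have hq1mem : q1 ∈ g.support := (Finset.mem_filter.mp hq1g).1
  have hq0val : tf q0 = gn v p k f := (Finset.mem_filter.mp hq0f).2
  have hq1val : tg q1 = gn v p k g := (Finset.mem_filter.mp hq1g).2
  have hstrict_f : ∀ q ∈ f.support, q0 < q → tf q < gn v p k f := by
    intro q hq hlt
    rcases lt_or_eq_of_le (le_trans (Finset.le_sup (f := tf) hq) (le_of_eq hgf_eq.symm)) with h | h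
    · exact h
    · exact absurd (Tf.le_max' q (Finset.mem_filter.mpr ⟨hq, h⟩)) (not_le.mpr hlt)
  have hstrict_g : ∀ q ∈ g.support, q1 < q → tg q < gn v p k g := by
    intro q hq hlt
    rcases lt_or_eq_of_le (le_trans (Finset.le_sup (f := tg) hq) (le_of_eq hgg_eq.symm)) with h | h
    · exact h
    · exact absurd (Tg.le_max' q (Finset.mem_filter.mpr ⟨hq, h⟩)) (not_le.mpr hlt)
  have hvq0 : v (f q0 : K) ≠ 0 := by
    rw [Valuation.ne_zero_iff]
    exact fun h => Finsupp.mem_support_iff.mp hq0mem (Subtype.ext h)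
  have hvq1 : v (g q1 : K) ≠ 0 := by
    rw [Valuation.ne_zero_iff]
    exact fun h => Finsupp.mem_support_iff.mp hq1mem (Subtype.ext h)
  have hne : v (f q0 : K) * v (g q1 : K) ≠ 0 := mul_ne_zero hvq0 hvq1
  -- the coefficient at q0 + q1 has valuation exactly the product
  have hcoef : v (((f * g) (q0 + q1) : v.integer) : K) = v (f q0 : K) * v (g q1 : K) := by
    rw [coe_mul_apply, ← Finset.sum_product']
    have hmem : ((q0, q1) : pPowRat p × pPowRat p) ∈ f.support ×ˢ g.support :=
      Finset.mem_product.mpr ⟨hq0mem, hq1mem⟩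
    have hneM : v ((f q0 : K) * (g q1 : K)) ≠ 0 := by rw [v.map_mul]; exact hne
    rw [← Finset.add_sum_erase _ _ hmem, if_pos rfl, ← v.map_mul]
    apply Valuation.map_add_eq_of_lt_left
    apply Valuation.map_sum_lt _ hneM
    intro x hx
    obtain ⟨hx_ne, hx_mem⟩ := Finset.mem_erase.mp hx
    obtain ⟨hx1, hx2⟩ := Finset.mem_product.mp hx_mem
    by_cases hcond : x.1 + x.2 = q0 + q1
    · rw [if_pos hcond, v.map_mul, v.map_mul]
      have hor : q0 < x.1 ∨ q1 < x.2 := by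
        by_contra hcon
        push_neg at hcon
        obtain ⟨h1, h2⟩ := hcon
        have hcQ : (x.1 : ℚ) + (x.2 : ℚ) = (q0 : ℚ) + (q1 : ℚ) := by
          have := congrArg (fun z : pPowRat p => (z : ℚ)) hcond
          push_cast at this
          exact this
        have h1' : (x.1 : ℚ) ≤ (q0 : ℚ) := h1
        have h2' : (x.2 : ℚ) ≤ (q1 : ℚ) := h2
        have e1 : (x.1 : ℚ) = (q0 : ℚ) := by linarith
        have e2 : (x.2 : ℚ) = (q1 : ℚ) := by linarith
        exact hx_ne (Prod.ext (Subtype.ext e1) (Subtype.ext e2))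
      have hkey : tf x.1 * tg x.2 < gn v p k f * gn v p k g := by
        rcases hor with h | h
        · have h2 : tg x.2 ≤ gn v p k g := le_trans (Finset.le_sup (f := tg) hx2) hgg_eq.ge
          calc tf x.1 * tg x.2 ≤ tf x.1 * gn v p k g := mul_le_mul_right h2 _
            _ < gn v p k f * gn v p k g :=
                mul_lt_mul_of_pos_right (hstrict_f _ hx1 h) hgng
        · have h2 : tf x.1 ≤ gn v p k f := le_trans (Finset.le_sup (f := tf) hx1) hgf_eq.ge
          calc tf x.1 * tg x.2 ≤ gn v p k f * tg x.2 := mul_le_mul_left h2 _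
            _ < gn v p k f * gn v p k g :=
                mul_lt_mul_of_pos_left (hstrict_g _ hx2 h) hgnf
      have hmul : (v (f x.1 : K) * v (g x.2 : K)) * rq v p k (q0 + q1)
          < (v (f q0 : K) * v (g q1 : K)) * rq v p k (q0 + q1) := by
        calc (v (f x.1 : K) * v (g x.2 : K)) * rq v p k (q0 + q1)
            = tf x.1 * tg x.2 := by rw [← hcond, rq_add hp0.ne', htf, htg]; ring
          _ < gn v p k f * gn v p k g := hkey
          _ = (v (f q0 : K) * v (g q1 : K)) * rq v p k (q0 + q1) := by
              rw [← hq0val, ← hq1val, rq_add hp0.ne', htf, htg]; ring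
      exact lt_of_mul_lt_mul_right hmul (zero_le)
    · rw [if_neg hcond, v.map_zero]
      exact pos_iff_ne_zero.mpr hneM
  calc gn v p k f * gn v p k g
      = v (((f * g) (q0 + q1) : v.integer) : K) * rq v p k (q0 + q1) := by
        rw [hcoef, ← hq0val, ← hq1val, rq_add hp0.ne', htf, htg]; ring
    _ ≤ gn v p k (f * g) := term_le_gn k (f * g) (q0 + q1)

end gmul


section gsingle

variable {v : Valuation K NNReal} {p : ℕ}

lemma rq_zero (k : ℕ) : rq v p k (0 : pPowRat p) = 1 := by
  unfold rq
  have : (((0 : pPowRat p) : ℚ) : ℝ) * k = 0 := by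
    norm_num
  rw [this, NNReal.rpow_zero]

lemma gn_single_le (k : ℕ) (q : pPowRat p) (a : v.integer) :
    gn v p k (AddMonoidAlgebra.single q a) ≤ v (a : K) * rq v p k q := by
  apply gn_le
  intro q' hq'
  have hq'q : q' = q := Finset.mem_singleton.mp (Finsupp.support_single_subset hq')
  subst hq'q
  rw [AddMonoidAlgebra.coeff_single, Finsupp.single_eq_same]

lemma gn_single (k : ℕ) (q : pPowRat p) {a : v.integer} (ha : a ≠ 0) :
    gn v p k (AddMonoidAlgebra.single q a) = v (a : K) * rq v p k q := by
  refine le_antisymm (gn_single_le k q a) ?_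
  have : (AddMonoidAlgebra.single q a : AddMonoidAlgebra v.integer (pPowRat p)) q = a :=
    Finsupp.single_eq_same
  calc v (a : K) * rq v p k q
      = v ((AddMonoidAlgebra.single q a : AddMonoidAlgebra v.integer (pPowRat p)) q : K)
        * rq v p k q := by rw [this]
    _ ≤ _ := term_le_gn k _ q

lemma coe_natCast_int (n : ℕ) : (((n : v.integer)) : K) = (n : K) := by
  push_cast
  rfl

lemma pnat_ne_zero (hp0 : 0 < v (p : K)) : ((p : v.integer)) ≠ 0 := by
  intro h
  have : ((p : v.integer) : K) = 0 := by rw [h]; rfl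
  rw [coe_natCast_int] at this
  rw [this] at hp0
  simp at hp0

lemma pi_eq : algebraMap v.integer (AddMonoidAlgebra v.integer (pPowRat p)) (p : v.integer)
    = AddMonoidAlgebra.single 0 (p : v.integer) := by
  have := congrFun (AddMonoidAlgebra.coe_algebraMap (R := v.integer) (A := v.integer)
    (M := pPowRat p)) (p : v.integer)
  simpa using this

lemma gn_pi (hp0 : 0 < v (p : K)) (k : ℕ) :
    gn v p k (algebraMap v.integer (AddMonoidAlgebra v.integer (pPowRat p)) (p : v.integer))
      = v (p : K) := by
  rw [pi_eq, gn_single k 0 (pnat_ne_zero hp0), rq_zero, coe_natCast_int, mul_one]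

lemma gn_one (k : ℕ) : gn v p k (1 : AddMonoidAlgebra v.integer (pPowRat p)) = 1 := by
  rw [AddMonoidAlgebra.one_def, gn_single k 0 (one_ne_zero), rq_zero]
  simp

lemma gn_dvd_le (hp0 : 0 < v (p : K)) (hp1 : v (p : K) ≤ 1) (k j : ℕ)
    {e : AddMonoidAlgebra v.integer (pPowRat p)}
    (h : (algebraMap v.integer (AddMonoidAlgebra v.integer (pPowRat p)) (p : v.integer)) ^ j ∣ e) :
    gn v p k e ≤ v (p : K) ^ j := by
  obtain ⟨h', rfl⟩ := h
  by_cases hz : h' = 0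
  · subst hz; rw [mul_zero, gn_zero]; exact zero_le
  calc gn v p k (_ ^ j * h') ≤ gn v p k (_ ^ j) * gn v p k h' := gn_mul_le hp0.ne' k _ _
    _ ≤ v (p : K) ^ j * 1 := by
        refine mul_le_mul' ?_ (gn_le_one hp1 k h')
        rw [← map_pow]
        have hpj : ((p : v.integer)) ^ j ≠ 0 := pow_ne_zero j (pnat_ne_zero hp0)
        have hsingle : (algebraMap v.integer (AddMonoidAlgebra v.integer (pPowRat p)))
            ((p : v.integer) ^ j) = AddMonoidAlgebra.single 0 ((p : v.integer) ^ j) := by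
          have := congrFun (AddMonoidAlgebra.coe_algebraMap (R := v.integer) (A := v.integer)
            (M := pPowRat p)) ((p : v.integer) ^ j)
          simpa using this
        rw [hsingle, gn_single k 0 hpj, rq_zero, mul_one]
        have : (((p : v.integer) ^ j : v.integer) : K) = (p : K) ^ j := by push_cast; rfl
        rw [this, map_pow]
    _ = v (p : K) ^ j := mul_one _

lemma gn_add_eq (k : ℕ) {f e : AddMonoidAlgebra v.integer (pPowRat p)}
    (h : gn v p k e < gn v p k f) : gn v p k (f + e) = gn v p k f := by
  refine le_antisymm (le_trans (gn_add_le k f e) (by rw [max_eq_left h.le])) ?_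
  have h2 : gn v p k f ≤ max (gn v p k (f + e)) (gn v p k e) := by
    have := gn_add_le k (f + e) (-e)
    rw [add_neg_cancel_right, gn_neg] at this
    exact this
  rcases max_cases (gn v p k (f + e)) (gn v p k e) with ⟨heq, _⟩ | ⟨heq, _⟩
  · rwa [heq] at h2
  · rw [heq] at h2
    exact absurd (lt_of_lt_of_le h h2) (lt_irrefl _)

lemma max_gn_congr (k : ℕ) {f f' : AddMonoidAlgebra v.integer (pPowRat p)} {c : NNReal}
    (h : gn v p k (f - f') ≤ c) :
    max (gn v p k f) c = max (gn v p k f') c := by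
  have key : ∀ (a b : AddMonoidAlgebra v.integer (pPowRat p)), gn v p k (a - b) ≤ c →
      max (gn v p k a) c ≤ max (gn v p k b) c := by
    intro a b hab
    refine max_le ?_ (le_max_right _ _)
    have : a = b + (a - b) := by ring
    rw [this]
    exact le_trans (gn_add_le k b (a - b))
      (max_le (le_max_left _ _) (le_trans hab (le_max_right _ _)))
  refine le_antisymm (key f f' h) (key f' f ?_)
  have : f' - f = -(f - f') := by ring
  rw [this, gn_neg]
  exact h

end gsingle

section Vh

variable {v : Valuation K NNReal} {p : ℕ}

/-- the `p`-ideal in the monoid algebra -/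
noncomputable def Iof (v : Valuation K NNReal) (p : ℕ) :
    Ideal (AddMonoidAlgebra v.integer (pPowRat p)) :=
  Ideal.span {algebraMap v.integer (AddMonoidAlgebra v.integer (pPowRat p)) (p : v.integer)}

lemma mem_Ipow_iff (j : ℕ) (x : AddMonoidAlgebra v.integer (pPowRat p)) :
    x ∈ ((Iof v p) ^ j • ⊤ :
        Submodule (AddMonoidAlgebra v.integer (pPowRat p)) (AddMonoidAlgebra v.integer (pPowRat p)))
      ↔ (algebraMap v.integer (AddMonoidAlgebra v.integer (pPowRat p)) (p : v.integer)) ^ j ∣ x := by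
  have h1 : ((Iof v p) ^ j • ⊤ : Ideal (AddMonoidAlgebra v.integer (pPowRat p))) = (Iof v p) ^ j := by
    ext y; simp
  rw [show ((Iof v p) ^ j • ⊤ :
      Submodule (AddMonoidAlgebra v.integer (pPowRat p)) (AddMonoidAlgebra v.integer (pPowRat p)))
      = (Iof v p) ^ j from h1]
  rw [Iof, Ideal.span_singleton_pow, Ideal.mem_span_singleton]

/-- the capped Gauss norm on the adic completion -/
noncomputable def Vh (k : ℕ) (F : AdicCompletion (Iof v p) (AddMonoidAlgebra v.integer (pPowRat p))) :
    NNReal :=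
  ⨅ j : ℕ, max (gn v p k (Quotient.out (F.val j))) (v (p : K) ^ j)

/-- capped norms of a Cauchy sequence -/
noncomputable def capSeq (k : ℕ)
    (f : AdicCompletion.AdicCauchySequence (Iof v p) (AddMonoidAlgebra v.integer (pPowRat p)))
    (j : ℕ) : NNReal :=
  max (gn v p k (f j)) (v (p : K) ^ j)

lemma Vh_mk (hp0 : 0 < v (p : K)) (hp1 : v (p : K) ≤ 1) (k : ℕ)
    (f : AdicCompletion.AdicCauchySequence (Iof v p) (AddMonoidAlgebra v.integer (pPowRat p))) :
    Vh k (AdicCompletion.mk (Iof v p) _ f) = ⨅ j : ℕ, capSeq k f j := by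
  unfold Vh capSeq
  congr 1
  funext j
  have hval : (AdicCompletion.mk (Iof v p) _ f).val j = Submodule.Quotient.mk (f j) := by
    rw [AdicCompletion.mk_apply_coe, Submodule.mkQ_apply]
  have hmem : Quotient.out ((AdicCompletion.mk (Iof v p) _ f).val j) - f j
      ∈ ((Iof v p) ^ j • ⊤ : Submodule (AddMonoidAlgebra v.integer (pPowRat p))
          (AddMonoidAlgebra v.integer (pPowRat p))) := by
    rw [← Submodule.Quotient.eq, hval]
    rw [← Submodule.Quotient.mk''_eq_mk]
    exact Quotient.out_eq' _
  exact max_gn_congr k (gn_dvd_le hp0 hp1 k j ((mem_Ipow_iff j _).mp hmem))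

lemma capSeq_anti (hp0 : 0 < v (p : K)) (hp1 : v (p : K) ≤ 1) (k : ℕ)
    (f : AdicCompletion.AdicCauchySequence (Iof v p) (AddMonoidAlgebra v.integer (pPowRat p))) :
    Antitone (capSeq k f) := by
  apply antitone_nat_of_succ_le
  intro j
  unfold capSeq
  have hdiff : (algebraMap v.integer (AddMonoidAlgebra v.integer (pPowRat p)) (p : v.integer)) ^ j
      ∣ (f (j + 1) - f j) := by
    rw [← mem_Ipow_iff]
    have := f.property (Nat.le_succ j)
    rw [SModEq] at this
    have h2 := (Submodule.Quotient.eq _).mp this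
    have : f (j+1) - f j = -(f j - f (j+1)) := by ring
    rw [this]
    exact neg_mem h2
  have hg : gn v p k (f (j + 1)) ≤ max (gn v p k (f j)) (v (p : K) ^ j) := by
    have : f (j + 1) = f j + (f (j + 1) - f j) := by ring
    rw [this]
    exact le_trans (gn_add_le k _ _)
      (max_le_max (le_refl _) (gn_dvd_le hp0 hp1 k j hdiff))
  refine max_le (le_trans hg (le_refl _)) ?_
  calc v (p : K) ^ (j + 1) ≤ v (p : K) ^ j := pow_le_pow_of_le_one (zero_le) hp1 (Nat.le_succ j)
    _ ≤ max (gn v p k (f j)) (v (p : K) ^ j) := le_max_right _ _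

lemma Vh_le_capSeq (hp0 : 0 < v (p : K)) (hp1 : v (p : K) ≤ 1) (k : ℕ)
    (f : AdicCompletion.AdicCauchySequence (Iof v p) (AddMonoidAlgebra v.integer (pPowRat p)))
    (j : ℕ) : Vh k (AdicCompletion.mk (Iof v p) _ f) ≤ capSeq k f j := by
  rw [Vh_mk hp0 hp1]
  exact ciInf_le (OrderBot.bddBelow _) j

lemma gn_stable_seq (hp0 : 0 < v (p : K)) (hp1 : v (p : K) ≤ 1) (k : ℕ)
    (f : AdicCompletion.AdicCauchySequence (Iof v p) (AddMonoidAlgebra v.integer (pPowRat p)))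
    {j j' : ℕ} (hjj' : j ≤ j') (h : v (p : K) ^ j < gn v p k (f j)) :
    gn v p k (f j') = gn v p k (f j) := by
  have hdiff : (algebraMap v.integer (AddMonoidAlgebra v.integer (pPowRat p)) (p : v.integer)) ^ j
      ∣ (f j' - f j) := by
    rw [← mem_Ipow_iff]
    have := f.property hjj'
    rw [SModEq] at this
    have h2 := (Submodule.Quotient.eq _).mp this
    have he : f j' - f j = -(f j - f j') := by ring
    rw [he]
    exact neg_mem h2
  have : f j' = f j + (f j' - f j) := by ring
  rw [this]
  exact gn_add_eq k (lt_of_le_of_lt (gn_dvd_le hp0 hp1 k j hdiff) h)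

lemma Vh_frozen (hp0 : 0 < v (p : K)) (hp1 : v (p : K) ≤ 1) (k : ℕ)
    (f : AdicCompletion.AdicCauchySequence (Iof v p) (AddMonoidAlgebra v.integer (pPowRat p)))
    (j : ℕ) (h : v (p : K) ^ j < gn v p k (f j)) :
    Vh k (AdicCompletion.mk (Iof v p) _ f) = gn v p k (f j) := by
  rw [Vh_mk hp0 hp1]
  have hcapj : capSeq k f j = gn v p k (f j) := max_eq_left h.le
  apply le_antisymm
  · exact le_trans (ciInf_le (OrderBot.bddBelow _) j) hcapj.le
  · apply le_ciInf
    intro j'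
    rcases le_total j j' with hle | hle
    · rw [capSeq, gn_stable_seq hp0 hp1 k f hle h]
      exact le_max_left _ _
    · exact le_trans hcapj.ge (capSeq_anti hp0 hp1 k f hle)

end Vh


section VhMul

variable {v : Valuation K NNReal} {p : ℕ}

lemma mk_mul (f g : AdicCompletion.AdicCauchySequence (Iof v p)
    (AddMonoidAlgebra v.integer (pPowRat p))) :
    AdicCompletion.mk (Iof v p) _ (f * g) =
      AdicCompletion.mk (Iof v p) _ f * AdicCompletion.mk (Iof v p) _ g := by
  exact map_mul (AdicCompletion.mkₐ (Iof v p)) f g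

lemma Vh_mk_zero (hp0 : 0 < v (p : K)) (hp1 : v (p : K) < 1) (k : ℕ)
    (f : AdicCompletion.AdicCauchySequence (Iof v p) (AddMonoidAlgebra v.integer (pPowRat p)))
    (h : ∀ j, gn v p k (f j) ≤ v (p : K) ^ j) :
    Vh k (AdicCompletion.mk (Iof v p) _ f) = 0 := by
  have hle : ∀ j, Vh k (AdicCompletion.mk (Iof v p) _ f) ≤ v (p : K) ^ j := by
    intro j
    refine le_trans (Vh_le_capSeq hp0 hp1.le k f j) ?_
    rw [capSeq, max_eq_right (h j)]
  by_contra h0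
  have hpos : 0 < Vh k (AdicCompletion.mk (Iof v p) _ f) := pos_iff_ne_zero.mpr h0
  obtain ⟨j, hj⟩ := exists_pow_lt_of_lt_one hpos hp1
  exact absurd (hle j) (not_le.mpr hj)

lemma Vh_mul (hp0 : 0 < v (p : K)) (hp1 : v (p : K) < 1) (k : ℕ)
    (F G : AdicCompletion (Iof v p) (AddMonoidAlgebra v.integer (pPowRat p))) :
    Vh k (F * G) = Vh k F * Vh k G := by
  obtain ⟨f, rfl⟩ := AdicCompletion.mk_surjective (Iof v p) _ F
  obtain ⟨g, rfl⟩ := AdicCompletion.mk_surjective (Iof v p) _ G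
  rw [← mk_mul]
  by_cases hf0 : ∀ j, gn v p k (f j) ≤ v (p : K) ^ j
  · rw [Vh_mk_zero hp0 hp1 k f hf0, zero_mul]
    apply Vh_mk_zero hp0 hp1
    intro j
    calc gn v p k ((f * g) j) = gn v p k (f j * g j) := by rw [AdicCompletion.mul_apply]
      _ ≤ gn v p k (f j) * gn v p k (g j) := gn_mul_le hp0.ne' k _ _
      _ ≤ v (p : K) ^ j * 1 := mul_le_mul' (hf0 j) (gn_le_one hp1.le k _)
      _ = v (p : K) ^ j := mul_one _
  by_cases hg0 : ∀ j, gn v p k (g j) ≤ v (p : K) ^ j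
  · rw [Vh_mk_zero hp0 hp1 k g hg0, mul_zero]
    apply Vh_mk_zero hp0 hp1
    intro j
    calc gn v p k ((f * g) j) = gn v p k (f j * g j) := by rw [AdicCompletion.mul_apply]
      _ ≤ gn v p k (f j) * gn v p k (g j) := gn_mul_le hp0.ne' k _ _
      _ ≤ 1 * (v (p : K) ^ j) := mul_le_mul' (gn_le_one hp1.le k _) (hg0 j)
      _ = v (p : K) ^ j := one_mul _
  push_neg at hf0 hg0
  obtain ⟨j1, hj1⟩ := hf0
  obtain ⟨j2, hj2⟩ := hg0
  have ha : 0 < gn v p k (f j1) := lt_of_le_of_lt (zero_le) hj1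
  have hb : 0 < gn v p k (g j2) := lt_of_le_of_lt (zero_le) hj2
  obtain ⟨j3, hj3⟩ := exists_pow_lt_of_lt_one (mul_pos ha hb) hp1
  set j := max (max j1 j2) j3 with hjdef
  have hj1j : j1 ≤ j := le_trans (le_max_left _ _) (le_max_left _ _)
  have hj2j : j2 ≤ j := le_trans (le_max_right _ _) (le_max_left _ _)
  have hj3j : j3 ≤ j := le_max_right _ _
  have hfj : gn v p k (f j) = gn v p k (f j1) := gn_stable_seq hp0 hp1.le k f hj1j hj1
  have hgj : gn v p k (g j) = gn v p k (g j2) := gn_stable_seq hp0 hp1.le k g hj2j hj2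
  have hfgt : v (p : K) ^ j < gn v p k (f j) := by
    rw [hfj]
    exact lt_of_le_of_lt (pow_le_pow_of_le_one (zero_le) hp1.le hj1j) hj1
  have hggt : v (p : K) ^ j < gn v p k (g j) := by
    rw [hgj]
    exact lt_of_le_of_lt (pow_le_pow_of_le_one (zero_le) hp1.le hj2j) hj2
  have hne_f : (f j : AddMonoidAlgebra v.integer (pPowRat p)) ≠ 0 := by
    intro h
    rw [h, gn_zero] at hfgt
    exact absurd hfgt (not_lt.mpr (zero_le))
  have hne_g : (g j : AddMonoidAlgebra v.integer (pPowRat p)) ≠ 0 := by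
    intro h
    rw [h, gn_zero] at hggt
    exact absurd hggt (not_lt.mpr (zero_le))
  have hprod : gn v p k ((f * g) j) = gn v p k (f j) * gn v p k (g j) := by
    rw [AdicCompletion.mul_apply]
    exact gn_mul hp0 k hne_f hne_g
  have hfggt : v (p : K) ^ j < gn v p k ((f * g) j) := by
    rw [hprod, hfj, hgj]
    exact lt_of_le_of_lt (pow_le_pow_of_le_one (zero_le) hp1.le hj3j) hj3
  rw [Vh_frozen hp0 hp1.le k (f * g) j hfggt, Vh_frozen hp0 hp1.le k f j hfgt,
    Vh_frozen hp0 hp1.le k g j hggt, hprod]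

lemma Vh_add_le (hp0 : 0 < v (p : K)) (hp1 : v (p : K) ≤ 1) (k : ℕ)
    (F G : AdicCompletion (Iof v p) (AddMonoidAlgebra v.integer (pPowRat p))) :
    Vh k (F + G) ≤ max (Vh k F) (Vh k G) := by
  obtain ⟨f, rfl⟩ := AdicCompletion.mk_surjective (Iof v p) _ F
  obtain ⟨g, rfl⟩ := AdicCompletion.mk_surjective (Iof v p) _ G
  rw [← map_add]
  by_contra hcon
  rw [not_le] at hcon
  have hF : Vh k (AdicCompletion.mk (Iof v p) _ f)
      < Vh k (AdicCompletion.mk (Iof v p) _ (f + g)) :=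
    lt_of_le_of_lt (le_max_left _ _) hcon
  have hG : Vh k (AdicCompletion.mk (Iof v p) _ g)
      < Vh k (AdicCompletion.mk (Iof v p) _ (f + g)) :=
    lt_of_le_of_lt (le_max_right _ _) hcon
  rw [Vh_mk hp0 hp1 k f] at hF
  rw [Vh_mk hp0 hp1 k g] at hG
  obtain ⟨j1, hj1⟩ := exists_lt_of_ciInf_lt hF
  obtain ⟨j2, hj2⟩ := exists_lt_of_ciInf_lt hG
  set j := max j1 j2 with hj
  have h1 : capSeq k f j < Vh k (AdicCompletion.mk (Iof v p) _ (f + g)) :=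
    lt_of_le_of_lt (capSeq_anti hp0 hp1 k f (le_max_left _ _)) hj1
  have h2 : capSeq k g j < Vh k (AdicCompletion.mk (Iof v p) _ (f + g)) :=
    lt_of_le_of_lt (capSeq_anti hp0 hp1 k g (le_max_right _ _)) hj2
  have h3 : Vh k (AdicCompletion.mk (Iof v p) _ (f + g)) ≤ max (capSeq k f j) (capSeq k g j) := by
    refine le_trans (Vh_le_capSeq hp0 hp1 k (f + g) j) ?_
    unfold capSeq
    have : gn v p k ((f + g) j) ≤ max (gn v p k (f j)) (gn v p k (g j)) := by
      rw [AdicCompletion.AdicCauchySequence.add_apply]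
      exact gn_add_le k _ _
    rcases max_cases (gn v p k (f j)) (gn v p k (g j)) with ⟨he, _⟩ | ⟨he, _⟩
    · rw [he] at this
      exact max_le (le_trans this (le_trans (le_max_left _ _) (le_max_left _ _)))
        (le_trans (le_max_right _ _) (le_max_left _ _))
    · rw [he] at this
      exact max_le (le_trans this (le_trans (le_max_left _ _) (le_max_right _ _)))
        (le_trans (le_max_right _ _) (le_max_left _ _))
  rcases max_cases (capSeq k f j) (capSeq k g j) with ⟨he, _⟩ | ⟨he, _⟩
  · rw [he] at h3
    exact absurd h3 (not_le.mpr h1)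
  · rw [he] at h3
    exact absurd h3 (not_le.mpr h2)

/-- the constant Cauchy sequence -/
def cstSeq (x : AddMonoidAlgebra v.integer (pPowRat p)) :
    AdicCompletion.AdicCauchySequence (Iof v p) (AddMonoidAlgebra v.integer (pPowRat p)) :=
  ⟨fun _ => x, fun _ => rfl⟩

lemma mk_cst (x : AddMonoidAlgebra v.integer (pPowRat p)) :
    AdicCompletion.mk (Iof v p) _ (cstSeq x) =
      algebraMap (AddMonoidAlgebra v.integer (pPowRat p))
        (AdicCompletion (Iof v p) (AddMonoidAlgebra v.integer (pPowRat p))) x := by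
  rfl

lemma Vh_algebraMap_frozen (hp0 : 0 < v (p : K)) (hp1 : v (p : K) ≤ 1) (k : ℕ)
    (x : AddMonoidAlgebra v.integer (pPowRat p)) (j : ℕ) (h : v (p : K) ^ j < gn v p k x) :
    Vh k (algebraMap (AddMonoidAlgebra v.integer (pPowRat p))
      (AdicCompletion (Iof v p) (AddMonoidAlgebra v.integer (pPowRat p))) x) = gn v p k x := by
  rw [← mk_cst]
  exact Vh_frozen hp0 hp1 k (cstSeq x) j h

lemma Vh_one (hp0 : 0 < v (p : K)) (hp1 : v (p : K) < 1) (k : ℕ) :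
    Vh k (1 : AdicCompletion (Iof v p) (AddMonoidAlgebra v.integer (pPowRat p))) = 1 := by
  have h1 : (1 : AdicCompletion (Iof v p) (AddMonoidAlgebra v.integer (pPowRat p)))
      = algebraMap _ _ (1 : AddMonoidAlgebra v.integer (pPowRat p)) := (map_one _).symm
  rw [h1, Vh_algebraMap_frozen hp0 hp1.le k 1 1 (by rw [gn_one, pow_one]; exact hp1), gn_one]

lemma Vh_pihat (hp0 : 0 < v (p : K)) (hp1 : v (p : K) < 1) (k : ℕ) :
    Vh k (algebraMap (AddMonoidAlgebra v.integer (pPowRat p))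
      (AdicCompletion (Iof v p) (AddMonoidAlgebra v.integer (pPowRat p)))
      (algebraMap v.integer (AddMonoidAlgebra v.integer (pPowRat p)) (p : v.integer)))
      = v (p : K) := by
  rw [Vh_algebraMap_frozen hp0 hp1.le k _ 2 ?_, gn_pi hp0]
  rw [gn_pi hp0]
  calc v (p : K) ^ 2 = v (p : K) * v (p : K) := sq _
    _ < 1 * v (p : K) := mul_lt_mul_of_pos_right hp1 hp0
    _ = v (p : K) := one_mul _

lemma Vh_zero' (hp0 : 0 < v (p : K)) (hp1 : v (p : K) < 1) (k : ℕ) :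
    Vh k (0 : AdicCompletion (Iof v p) (AddMonoidAlgebra v.integer (pPowRat p))) = 0 := by
  have h0 : (0 : AdicCompletion (Iof v p) (AddMonoidAlgebra v.integer (pPowRat p)))
      = AdicCompletion.mk (Iof v p) _ 0 := (map_zero _).symm
  rw [h0]
  apply Vh_mk_zero hp0 hp1
  intro j
  rw [AdicCompletion.AdicCauchySequence.zero_apply, gn_zero]
  exact zero_le

lemma Vh_le_one (hp0 : 0 < v (p : K)) (hp1 : v (p : K) ≤ 1) (k : ℕ)
    (F : AdicCompletion (Iof v p) (AddMonoidAlgebra v.integer (pPowRat p))) :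
    Vh k F ≤ 1 := by
  obtain ⟨f, rfl⟩ := AdicCompletion.mk_surjective (Iof v p) _ F
  refine le_trans (Vh_le_capSeq hp0 hp1 k f 0) ?_
  rw [capSeq, pow_zero]
  exact max_le (gn_le_one hp1 k _) le_rfl

end VhMul


section PPsec

variable {v : Valuation K NNReal} {p : ℕ}

lemma exists_K {s s' : ℝ} (hss' : s < s') :
    ∃ KK : ℕ, 2 ≤ KK ∧ ∀ k : ℕ, KK ≤ k → (k : ℝ) ^ s + (k : ℝ) ^ s ≤ (k : ℝ) ^ s' := by
  refine ⟨max 2 (⌈(2 : ℝ) ^ (1 / (s' - s))⌉₊ + 1), le_max_left _ _, ?_⟩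
  intro k hk
  have hk2 : (2 : ℕ) ≤ k := le_trans (le_max_left _ _) hk
  have hk1 : (1 : ℝ) ≤ (k : ℝ) := by exact_mod_cast le_trans (by norm_num) hk2
  have hkpos : (0 : ℝ) < (k : ℝ) := lt_of_lt_of_le one_pos hk1
  have hkc : (2 : ℝ) ^ (1 / (s' - s)) ≤ (k : ℝ) := by
    have h1 : (⌈(2 : ℝ) ^ (1 / (s' - s))⌉₊ + 1 : ℕ) ≤ k := le_trans (le_max_right _ _) hk
    calc (2 : ℝ) ^ (1 / (s' - s)) ≤ (⌈(2 : ℝ) ^ (1 / (s' - s))⌉₊ : ℝ) := Nat.le_ceil _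
      _ ≤ ((⌈(2 : ℝ) ^ (1 / (s' - s))⌉₊ + 1 : ℕ) : ℝ) := by push_cast; linarith
      _ ≤ (k : ℝ) := by exact_mod_cast h1
  have hdiff : 0 < s' - s := by linarith
  have h2le : (2 : ℝ) ≤ (k : ℝ) ^ (s' - s) := by
    have h := Real.rpow_le_rpow (Real.rpow_nonneg (by norm_num) _) hkc hdiff.le
    rwa [← Real.rpow_mul (by norm_num : (0:ℝ) ≤ 2), one_div_mul_cancel hdiff.ne',
      Real.rpow_one] at h
  have hkspos : (0 : ℝ) < (k : ℝ) ^ s := Real.rpow_pos_of_pos hkpos s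
  calc (k : ℝ) ^ s + (k : ℝ) ^ s = 2 * (k : ℝ) ^ s := by ring
    _ ≤ (k : ℝ) ^ (s' - s) * (k : ℝ) ^ s := mul_le_mul_of_nonneg_right h2le hkspos.le
    _ = (k : ℝ) ^ s' := by rw [← Real.rpow_add hkpos]; ring_nf

lemma exp_reverse (hp0 : 0 < v (p : K)) (hp1 : v (p : K) < 1) {a b : ℝ}
    (h : v (p : K) ^ (a : ℝ) ≤ v (p : K) ^ (b : ℝ)) : b ≤ a := by
  by_contra hab
  push_neg at hab
  exact absurd h (not_le.mpr (NNReal.rpow_lt_rpow_of_exponent_gt hp0 hp1 hab))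

lemma PP_small_tail (hp0 : 0 < v (p : K)) (hp1 : v (p : K) < 1) {s : ℝ} (hs0 : 0 < s)
    {c : NNReal} (hc : 0 < c) :
    {k : ℕ | c ≤ v (p : K) ^ ((k : ℝ) ^ s)}.Finite := by
  obtain ⟨j0, hj0⟩ := exists_pow_lt_of_lt_one hc hp1
  refine Set.Finite.subset (Set.finite_Iic (⌈((j0 : ℝ)) ^ (1 / s)⌉₊ + 1)) ?_
  intro k hk
  simp only [Set.mem_setOf_eq] at hk
  by_contra hbig
  simp only [Set.mem_Iic, not_le] at hbig
  have hkR : ((j0 : ℝ)) ^ (1 / s) < (k : ℝ) := by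
    calc ((j0 : ℝ)) ^ (1 / s) ≤ (⌈((j0 : ℝ)) ^ (1 / s)⌉₊ : ℝ) := Nat.le_ceil _
      _ < (k : ℝ) := by
        have h3 : (⌈((j0 : ℝ)) ^ (1 / s)⌉₊ + 1 : ℕ) ≤ k := hbig.le
        have h4 : ((⌈((j0 : ℝ)) ^ (1 / s)⌉₊ : ℝ)) + 1 ≤ (k : ℝ) := by exact_mod_cast h3
        linarith
  have hj0k : (j0 : ℝ) ≤ (k : ℝ) ^ s := by
    have h1 : (((j0 : ℝ)) ^ (1 / s)) ^ s ≤ (k : ℝ) ^ s :=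
      Real.rpow_le_rpow (Real.rpow_nonneg (Nat.cast_nonneg _) _) hkR.le hs0.le
    rwa [← Real.rpow_mul (Nat.cast_nonneg _), one_div_mul_cancel hs0.ne',
      Real.rpow_one] at h1
  have h2 : v (p : K) ^ ((k : ℝ) ^ s) ≤ v (p : K) ^ ((j0 : ℝ)) :=
    NNReal.rpow_le_rpow_of_exponent_ge hp0 hp1.le hj0k
  rw [NNReal.rpow_natCast] at h2
  exact absurd hk (not_le.mpr (lt_of_le_of_lt h2 hj0))

/-- the prime ideal at level `lam` -/
noncomputable def PP (hp0 : 0 < v (p : K)) (hp1 : v (p : K) < 1) (lam : ℝ) :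
    Ideal (AdicCompletion (Iof v p) (AddMonoidAlgebra v.integer (pPowRat p))) where
  carrier := {F | ∀ s : ℝ, 0 < s → s < lam →
    {k : ℕ | Vh k F ≤ v (p : K) ^ ((k : ℝ) ^ s)} ∈ (Filter.hyperfilter ℕ : Filter ℕ)}
  zero_mem' := by
    intro s hs0 hsl
    have : {k : ℕ | Vh k (0 : AdicCompletion (Iof v p) (AddMonoidAlgebra v.integer (pPowRat p)))
        ≤ v (p : K) ^ ((k : ℝ) ^ s)} = Set.univ := by
      apply Set.eq_univ_of_forall
      intro k
      simp only [Set.mem_setOf_eq, Vh_zero' hp0 hp1 k]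
      exact zero_le
    rw [this]
    exact Filter.univ_mem
  add_mem' := by
    intro F G hF hG s hs0 hsl
    refine Filter.mem_of_superset (Filter.inter_mem (hF s hs0 hsl) (hG s hs0 hsl)) ?_
    rintro k ⟨h1, h2⟩
    exact le_trans (Vh_add_le hp0 hp1.le k F G) (max_le h1 h2)
  smul_mem' := by
    intro c F hF s hs0 hsl
    refine Filter.mem_of_superset (hF s hs0 hsl) ?_
    intro k hk
    have hmul : Vh k (c • F) = Vh k c * Vh k F := by
      rw [smul_eq_mul]; exact Vh_mul hp0 hp1 k c F
    calc Vh k (c • F) = Vh k c * Vh k F := hmul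
      _ ≤ 1 * Vh k F := mul_le_mul_left (Vh_le_one hp0 hp1.le k c) _
      _ = Vh k F := one_mul _
      _ ≤ _ := hk

lemma mem_PP {hp0 : 0 < v (p : K)} {hp1 : v (p : K) < 1} {lam : ℝ}
    (F : AdicCompletion (Iof v p) (AddMonoidAlgebra v.integer (pPowRat p))) :
    F ∈ PP hp0 hp1 lam ↔ ∀ s : ℝ, 0 < s → s < lam →
      {k : ℕ | Vh k F ≤ v (p : K) ^ ((k : ℝ) ^ s)} ∈ (Filter.hyperfilter ℕ : Filter ℕ) :=
  Iff.rfl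

lemma notmem_PP_of_const {hp0 : 0 < v (p : K)} {hp1 : v (p : K) < 1} {lam : ℝ}
    (hlam : 0 < lam)
    (F : AdicCompletion (Iof v p) (AddMonoidAlgebra v.integer (pPowRat p))) (c : NNReal)
    (hc : 0 < c) (hVF : ∀ k : ℕ, c ≤ Vh k F) : F ∉ PP hp0 hp1 lam := by
  intro hmem
  have hs := (mem_PP F).mp hmem (lam / 2) (by linarith) (by linarith)
  have hsub : {k : ℕ | Vh k F ≤ v (p : K) ^ ((k : ℝ) ^ (lam / 2))}
      ⊆ {k : ℕ | c ≤ v (p : K) ^ ((k : ℝ) ^ (lam / 2))} :=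
    fun k hk => le_trans (hVF k) hk
  exact Set.Finite.notMem_hyperfilter
    (Set.Finite.subset (PP_small_tail hp0 hp1 (by linarith) hc) hsub) hs

lemma PP_one_notmem (hp0 : 0 < v (p : K)) (hp1 : v (p : K) < 1) {lam : ℝ} (hlam : 0 < lam) :
    (1 : AdicCompletion (Iof v p) (AddMonoidAlgebra v.integer (pPowRat p)))
      ∉ PP hp0 hp1 lam :=
  notmem_PP_of_const (hp0 := hp0) (hp1 := hp1) hlam _ 1 one_pos
    (fun k => (Vh_one hp0 hp1 k).ge)

lemma PP_pihat_notmem (hp0 : 0 < v (p : K)) (hp1 : v (p : K) < 1) {lam : ℝ} (hlam : 0 < lam) :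
    (algebraMap (AddMonoidAlgebra v.integer (pPowRat p))
      (AdicCompletion (Iof v p) (AddMonoidAlgebra v.integer (pPowRat p)))
      (algebraMap v.integer (AddMonoidAlgebra v.integer (pPowRat p)) (p : v.integer)))
      ∉ PP hp0 hp1 lam :=
  notmem_PP_of_const (hp0 := hp0) (hp1 := hp1) hlam _ (v (p : K)) hp0
    (fun k => (Vh_pihat hp0 hp1 k).ge)

lemma PP_prime (hp0 : 0 < v (p : K)) (hp1 : v (p : K) < 1) {lam : ℝ} (hlam : 0 < lam) :
    (PP hp0 hp1 lam).IsPrime := by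
  constructor
  · intro htop
    exact PP_one_notmem hp0 hp1 hlam ((Ideal.eq_top_iff_one _).mp htop)
  · intro F G hFG
    by_contra hcon
    push_neg at hcon
    obtain ⟨hF, hG⟩ := hcon
    rw [mem_PP] at hF hG
    push_neg at hF hG
    obtain ⟨sF, hsF0, hsFl, hsF⟩ := hF
    obtain ⟨sG, hsG0, hsGl, hsG⟩ := hG
    set s : ℝ := max sF sG with hs
    have hs0 : 0 < s := lt_of_lt_of_le hsF0 (le_max_left _ _)
    have hsl : s < lam := max_lt hsFl hsGl
    set s' : ℝ := (s + lam) / 2 with hs'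
    have hss' : s < s' := by rw [hs']; linarith
    have hs'0 : 0 < s' := lt_trans hs0 hss'
    have hs'l : s' < lam := by rw [hs']; linarith
    obtain ⟨KK, hKK2, hKK⟩ := exists_K hss'
    have hA' := (mem_PP (F * G)).mp hFG s' hs'0 hs'l
    have hFc : {k : ℕ | Vh k F ≤ v (p : K) ^ ((k : ℝ) ^ sF)}ᶜ
        ∈ (Filter.hyperfilter ℕ : Filter ℕ) :=
      (Ultrafilter.compl_mem_iff_notMem).mpr hsF
    have hGc : {k : ℕ | Vh k G ≤ v (p : K) ^ ((k : ℝ) ^ sG)}ᶜ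
        ∈ (Filter.hyperfilter ℕ : Filter ℕ) :=
      (Ultrafilter.compl_mem_iff_notMem).mpr hsG
    have hC : {k : ℕ | KK ≤ k} ∈ (Filter.hyperfilter ℕ : Filter ℕ) := by
      have : {k : ℕ | KK ≤ k} = {k : ℕ | k < KK}ᶜ := by
        ext k; simp [not_lt]
      rw [this]
      exact Set.Finite.compl_mem_hyperfilter (Set.finite_Iio KK)
    have hall := Filter.inter_mem (Filter.inter_mem hA' hFc) (Filter.inter_mem hGc hC)
    obtain ⟨k, hk⟩ := Filter.nonempty_of_mem hall
    obtain ⟨⟨hk1, hk2⟩, hk3, hk4⟩ := hk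
    simp only [Set.mem_setOf_eq, Set.mem_compl_iff, not_le] at hk1 hk2 hk3 hk4
    -- hk2 : v p ^ (k^sF) < Vh k F, hk3 : same for G, hk1 : Vh k (F*G) ≤ v p ^ (k^s')
    have hk1R : (1 : ℝ) ≤ (k : ℝ) := by
      have : (1 : ℕ) ≤ k := le_trans (by norm_num) (le_trans hKK2 hk4)
      exact_mod_cast this
    have hmono : ∀ t : ℝ, t ≤ s → v (p : K) ^ ((k : ℝ) ^ s) ≤ v (p : K) ^ ((k : ℝ) ^ t) :=
      fun t ht => NNReal.rpow_le_rpow_of_exponent_ge hp0 hp1.le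
        (Real.rpow_le_rpow_of_exponent_le hk1R ht)
    have hlow : v (p : K) ^ ((k : ℝ) ^ s') ≤ v (p : K) ^ ((k : ℝ) ^ sF + (k : ℝ) ^ sG) := by
      apply NNReal.rpow_le_rpow_of_exponent_ge hp0 hp1.le
      calc (k : ℝ) ^ sF + (k : ℝ) ^ sG
          ≤ (k : ℝ) ^ s + (k : ℝ) ^ s :=
            add_le_add (Real.rpow_le_rpow_of_exponent_le hk1R (le_max_left _ _))
              (Real.rpow_le_rpow_of_exponent_le hk1R (le_max_right _ _))
        _ ≤ (k : ℝ) ^ s' := hKK k hk4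
    have hmulV : Vh k (F * G) = Vh k F * Vh k G := Vh_mul hp0 hp1 k F G
    have hstrict : v (p : K) ^ ((k : ℝ) ^ sF + (k : ℝ) ^ sG) < Vh k F * Vh k G := by
      rw [NNReal.rpow_add hp0.ne']
      exact mul_lt_mul'' hk2 hk3 (zero_le) (zero_le)
    have : Vh k (F * G) < Vh k (F * G) :=
      lt_of_le_of_lt (le_trans hk1 hlow) (by rw [hmulV]; exact hstrict)
    exact lt_irrefl _ this

lemma PP_antitone (hp0 : 0 < v (p : K)) (hp1 : v (p : K) < 1) {lam mu : ℝ}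
    (h : lam ≤ mu) : PP hp0 hp1 mu ≤ PP hp0 hp1 lam := by
  intro F hF
  rw [mem_PP] at hF ⊢
  intro s hs0 hsl
  exact hF s hs0 (lt_of_lt_of_le hsl h)

end PPsec


section witnessReal

/-- Lower bound: every term of the witness series is at least `t^θ`. -/
lemma real_R1 {θ t x A : ℝ} (hθ0 : 0 < θ) (hθ1 : θ < 1) (ht : 1 ≤ t)
    (hx1 : 1 ≤ x) (hA : x ^ (θ / (1 - θ)) ≤ A) : t ^ θ ≤ A + x⁻¹ * t := by
  have h1θ : 0 < 1 - θ := by linarith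
  have hσ : 0 < θ / (1 - θ) := div_pos hθ0 h1θ
  have htpos : 0 < t := lt_of_lt_of_le one_pos ht
  have hxpos : 0 < x := lt_of_lt_of_le one_pos hx1
  have hA0 : 0 ≤ A := le_trans (Real.rpow_nonneg hxpos.le _) hA
  have hinvt : 0 ≤ x⁻¹ * t := mul_nonneg (inv_nonneg.mpr hxpos.le) htpos.le
  rcases le_or_gt (t ^ (1 - θ)) x with h | h
  · have key : t ^ θ ≤ x ^ (θ / (1 - θ)) := by
      have h2 : (t ^ (1 - θ)) ^ (θ / (1 - θ)) ≤ x ^ (θ / (1 - θ)) :=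
        Real.rpow_le_rpow (Real.rpow_nonneg htpos.le _) h hσ.le
      rwa [← Real.rpow_mul htpos.le, mul_div_assoc', mul_comm, mul_div_assoc,
        div_self h1θ.ne', mul_one] at h2
    linarith [le_trans key hA]
  · have key : t ^ θ ≤ x⁻¹ * t := by
      have h2 : t / t ^ (1 - θ) ≤ t / x :=
        div_le_div_of_nonneg_left htpos.le hxpos h.le
      have hne : t ^ (1 - θ) ≠ 0 := (Real.rpow_pos_of_pos htpos _).ne'
      have hdiv : t / t ^ (1 - θ) = t ^ θ := by
        rw [eq_comm, eq_div_iff hne, ← Real.rpow_add htpos]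
        norm_num
      calc t ^ θ = t / t ^ (1 - θ) := hdiv.symm
        _ ≤ t / x := h2
        _ = x⁻¹ * t := by rw [div_eq_inv_mul]
    linarith

/-- Upper bound: a good index `m` making the term at most `C * t^θ`. -/
lemma real_R2 {P θ : ℝ} (hP : 1 < P) (hθ0 : 0 < θ) (hθ1 : θ < 1) (t : ℝ) (ht : 1 ≤ t) :
    ∃ m : ℕ, ((P ^ m : ℝ)) ^ (θ / (1 - θ)) + 1 + ((P ^ m : ℝ))⁻¹ * t
      ≤ (P ^ (θ / (1 - θ)) + 2) * t ^ θ := by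
  have h1θ : 0 < 1 - θ := by linarith
  have hσ : 0 < θ / (1 - θ) := div_pos hθ0 h1θ
  have htpos : 0 < t := lt_of_lt_of_le one_pos ht
  have hP0 : 0 < P := lt_trans one_pos hP
  have htθ1 : (1 : ℝ) ≤ t ^ (1 - θ) := Real.one_le_rpow ht h1θ.le
  have hlogb0 : 0 ≤ Real.logb P (t ^ (1 - θ)) := Real.logb_nonneg hP htθ1
  set m : ℕ := ⌈Real.logb P (t ^ (1 - θ))⌉₊ with hm
  have hPm : (P ^ m : ℝ) = P ^ (m : ℝ) := (Real.rpow_natCast P m).symm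
  have hlow : t ^ (1 - θ) ≤ P ^ (m : ℝ) := by
    have h1 : Real.logb P (t ^ (1 - θ)) ≤ (m : ℝ) := Nat.le_ceil _
    calc t ^ (1 - θ) = P ^ (Real.logb P (t ^ (1 - θ))) :=
          (Real.rpow_logb hP0 hP.ne' (lt_of_lt_of_le one_pos htθ1)).symm
      _ ≤ P ^ (m : ℝ) := Real.rpow_le_rpow_of_exponent_le hP.le h1
  have hhigh : P ^ (m : ℝ) ≤ P * t ^ (1 - θ) := by
    have h1 : (m : ℝ) ≤ Real.logb P (t ^ (1 - θ)) + 1 :=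
      le_of_lt (Nat.ceil_lt_add_one hlogb0)
    calc P ^ (m : ℝ) ≤ P ^ (Real.logb P (t ^ (1 - θ)) + 1) :=
          Real.rpow_le_rpow_of_exponent_le hP.le h1
      _ = P ^ (Real.logb P (t ^ (1 - θ))) * P ^ (1 : ℝ) := Real.rpow_add hP0 _ _
      _ = t ^ (1 - θ) * P := by
          rw [Real.rpow_logb hP0 hP.ne' (lt_of_lt_of_le one_pos htθ1), Real.rpow_one]
      _ = P * t ^ (1 - θ) := mul_comm _ _
  refine ⟨m, ?_⟩
  have htθ : (1 : ℝ) ≤ t ^ θ := Real.one_le_rpow ht hθ0.le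
  have hterm1 : ((P ^ m : ℝ)) ^ (θ / (1 - θ)) ≤ P ^ (θ / (1 - θ)) * t ^ θ := by
    rw [hPm]
    calc (P ^ (m : ℝ)) ^ (θ / (1 - θ)) ≤ (P * t ^ (1 - θ)) ^ (θ / (1 - θ)) :=
          Real.rpow_le_rpow (Real.rpow_nonneg hP0.le _) hhigh hσ.le
      _ = P ^ (θ / (1 - θ)) * (t ^ (1 - θ)) ^ (θ / (1 - θ)) :=
          Real.mul_rpow hP0.le (Real.rpow_nonneg htpos.le _)
      _ = P ^ (θ / (1 - θ)) * t ^ θ := by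
          rw [← Real.rpow_mul htpos.le, mul_div_assoc', mul_comm (1 - θ) θ, mul_div_assoc,
            div_self h1θ.ne', mul_one]
  have hterm2 : ((P ^ m : ℝ))⁻¹ * t ≤ t ^ θ := by
    rw [hPm]
    have hinv : (P ^ (m : ℝ))⁻¹ ≤ (t ^ (1 - θ))⁻¹ := by
      apply inv_anti₀ (lt_of_lt_of_le one_pos htθ1) hlow
    calc (P ^ (m : ℝ))⁻¹ * t ≤ (t ^ (1 - θ))⁻¹ * t :=
          mul_le_mul_of_nonneg_right hinv htpos.le
      _ = t / t ^ (1 - θ) := by rw [div_eq_inv_mul]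
      _ = t ^ θ := by
          have hne : t ^ (1 - θ) ≠ 0 := (Real.rpow_pos_of_pos htpos _).ne'
          rw [eq_comm, eq_div_iff hne, ← Real.rpow_add htpos]
          norm_num
  have hP2 : (0:ℝ) < P ^ (θ / (1 - θ)) := Real.rpow_pos_of_pos hP0 _
  calc ((P ^ m : ℝ)) ^ (θ / (1 - θ)) + 1 + ((P ^ m : ℝ))⁻¹ * t
      ≤ P ^ (θ / (1 - θ)) * t ^ θ + t ^ θ + t ^ θ := by
        have := htθ
        gcongr
      _ = (P ^ (θ / (1 - θ)) + 2) * t ^ θ := by ring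

/-- eventually `C * t^θ < t^s'` -/
lemma real_R3 {θ s' C : ℝ} (hθs : θ < s') (hC : 0 < C) :
    ∃ KK : ℕ, 2 ≤ KK ∧ ∀ k : ℕ, KK ≤ k → C * (k : ℝ) ^ θ < (k : ℝ) ^ s' := by
  refine ⟨max 2 (⌈C ^ (1 / (s' - θ))⌉₊ + 2), le_max_left _ _, ?_⟩
  intro k hk
  have hk2 : (2 : ℕ) ≤ k := le_trans (le_max_left _ _) hk
  have hk1 : (1 : ℝ) ≤ (k : ℝ) := by exact_mod_cast le_trans (by norm_num) hk2
  have hkpos : (0 : ℝ) < (k : ℝ) := lt_of_lt_of_le one_pos hk1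
  have hdiff : 0 < s' - θ := by linarith
  have hkc : C ^ (1 / (s' - θ)) < (k : ℝ) := by
    have h1 : (⌈C ^ (1 / (s' - θ))⌉₊ + 2 : ℕ) ≤ k := le_trans (le_max_right _ _) hk
    have h2 : ((⌈C ^ (1 / (s' - θ))⌉₊ : ℝ)) + 2 ≤ (k : ℝ) := by exact_mod_cast h1
    calc C ^ (1 / (s' - θ)) ≤ (⌈C ^ (1 / (s' - θ))⌉₊ : ℝ) := Nat.le_ceil _
      _ < (k : ℝ) := by linarith
  have hCk : C < (k : ℝ) ^ (s' - θ) := by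
    have h := Real.rpow_lt_rpow (Real.rpow_nonneg hC.le _) hkc hdiff
    rwa [← Real.rpow_mul hC.le, one_div_mul_cancel hdiff.ne', Real.rpow_one] at h
  have hkθ : (0 : ℝ) < (k : ℝ) ^ θ := Real.rpow_pos_of_pos hkpos _
  calc C * (k : ℝ) ^ θ < (k : ℝ) ^ (s' - θ) * (k : ℝ) ^ θ :=
        mul_lt_mul_of_pos_right hCk hkθ
    _ = (k : ℝ) ^ s' := by rw [← Real.rpow_add hkpos]; ring_nf

end witnessReal



variable {K : Type} [Field K]

section witdef

variable {v : Valuation K NNReal} {p : ℕ}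

lemma qexp_mem (hp2 : 2 ≤ p) (m : ℕ) : ((p : ℚ) ^ m)⁻¹ ∈ pPowRat p := by
  have hp0 : (0 : ℚ) < (p : ℚ) := by exact_mod_cast lt_of_lt_of_le two_pos hp2
  exact ⟨inv_nonneg.mpr (pow_nonneg hp0.le m), m, 1, by field_simp; norm_num⟩

/-- the exponent `p^{-m}` -/
def qexp (p : ℕ) (hp2 : 2 ≤ p) (m : ℕ) : pPowRat p := ⟨((p : ℚ) ^ m)⁻¹, qexp_mem hp2 m⟩

lemma qexp_injective (hp2 : 2 ≤ p) : Function.Injective (qexp p hp2) := by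
  intro m m' h
  have hp1Q : (1 : ℚ) < (p : ℚ) := by exact_mod_cast lt_of_lt_of_le one_lt_two hp2
  have h2 : ((p : ℚ) ^ m)⁻¹ = ((p : ℚ) ^ m')⁻¹ := congrArg Subtype.val h
  have h3 : (p : ℚ) ^ m = (p : ℚ) ^ m' := inv_injective h2
  by_contra hne
  rcases Nat.lt_or_ge m m' with hlt | hge
  · exact absurd h3 (ne_of_lt (pow_lt_pow_right₀ hp1Q hlt))
  · have hlt : m' < m := by omega
    exact absurd h3 (ne_of_gt (pow_lt_pow_right₀ hp1Q hlt))

/-- coefficient exponents -/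
noncomputable def acoef (p : ℕ) (θ : ℝ) (m : ℕ) : ℕ := ⌈(p : ℝ) ^ ((θ / (1 - θ)) * m)⌉₊

lemma acoef_mono (hp2 : 2 ≤ p) {θ : ℝ} (hθ0 : 0 < θ) (hθ1 : θ < 1) :
    Monotone (acoef p θ) := by
  intro m m' h
  have hp1R : (1 : ℝ) ≤ (p : ℝ) := by exact_mod_cast le_trans one_le_two hp2
  have hσ : 0 ≤ θ / (1 - θ) := le_of_lt (div_pos hθ0 (by linarith))
  exact Nat.ceil_le_ceil (Real.rpow_le_rpow_of_exponent_le hp1R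
    (mul_le_mul_of_nonneg_left (by exact_mod_cast h) hσ))

lemma pow_to_rpow (hp2 : 2 ≤ p) (σ : ℝ) (m : ℕ) :
    (((p : ℝ) ^ m : ℝ)) ^ σ = (p : ℝ) ^ (σ * m) := by
  have hp0 : (0 : ℝ) ≤ (p : ℝ) := Nat.cast_nonneg _
  rw [← Real.rpow_natCast (p : ℝ) m, ← Real.rpow_mul hp0, mul_comm]

lemma acoef_ge (hp2 : 2 ≤ p) (θ : ℝ) (m : ℕ) :
    (((p : ℝ) ^ m : ℝ)) ^ (θ / (1 - θ)) ≤ (acoef p θ m : ℝ) := by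
  rw [pow_to_rpow hp2]
  exact Nat.le_ceil _

lemma acoef_le (hp2 : 2 ≤ p) (θ : ℝ) (m : ℕ) :
    (acoef p θ m : ℝ) ≤ (((p : ℝ) ^ m : ℝ)) ^ (θ / (1 - θ)) + 1 := by
  rw [pow_to_rpow hp2]
  exact le_of_lt (Nat.ceil_lt_add_one (Real.rpow_nonneg (Nat.cast_nonneg _) _))

lemma acoef_unbounded (hp2 : 2 ≤ p) {θ : ℝ} (hθ0 : 0 < θ) (hθ1 : θ < 1) (j : ℕ) :
    ∃ m : ℕ, j ≤ acoef p θ m := by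
  have hp1R : (1 : ℝ) < (p : ℝ) := by exact_mod_cast lt_of_lt_of_le one_lt_two hp2
  have hσ : 0 < θ / (1 - θ) := div_pos hθ0 (by linarith)
  have h1 : 1 < (p : ℝ) ^ (θ / (1 - θ)) :=
    (Real.one_lt_rpow_iff_of_pos (lt_trans one_pos hp1R)).mpr (Or.inl ⟨hp1R, hσ⟩)
  obtain ⟨m, hm⟩ := pow_unbounded_of_one_lt (j : ℝ) h1
  refine ⟨m, ?_⟩
  have h2 : ((p : ℝ) ^ (θ / (1 - θ))) ^ m = (p : ℝ) ^ ((θ / (1 - θ)) * m) := by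
    rw [← Real.rpow_natCast ((p : ℝ) ^ (θ / (1 - θ))) m, ← Real.rpow_mul
      (le_of_lt (lt_trans one_pos hp1R))]
  have h3 : (j : ℝ) ≤ (acoef p θ m : ℝ) := by
    rw [acoef]
    calc (j : ℝ) ≤ (p : ℝ) ^ ((θ / (1 - θ)) * m) := by rw [← h2]; exact hm.le
      _ ≤ _ := Nat.le_ceil _
  exact_mod_cast h3

/-- truncation index -/
noncomputable def NNt (p : ℕ) (θ : ℝ) (hp2 : 2 ≤ p) (hθ0 : 0 < θ) (hθ1 : θ < 1) (j : ℕ) : ℕ :=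
  Nat.find (acoef_unbounded hp2 hθ0 hθ1 j)

lemma NNt_mono (hp2 : 2 ≤ p) {θ : ℝ} (hθ0 : 0 < θ) (hθ1 : θ < 1) :
    Monotone (NNt p θ hp2 hθ0 hθ1) := by
  intro j j' h
  exact Nat.find_mono (fun m hm => le_trans h hm)

lemma lt_NNt_iff (hp2 : 2 ≤ p) {θ : ℝ} (hθ0 : 0 < θ) (hθ1 : θ < 1) (j m : ℕ) :
    m < NNt p θ hp2 hθ0 hθ1 j ↔ acoef p θ m < j := by
  rw [NNt, Nat.lt_find_iff]
  constructor
  · intro h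
    exact not_le.mp (h m le_rfl)
  · intro h n hn
    exact not_le.mpr (lt_of_le_of_lt (by exact_mod_cast acoef_mono hp2 hθ0 hθ1 hn) h)

lemma NNt_spec (hp2 : 2 ≤ p) {θ : ℝ} (hθ0 : 0 < θ) (hθ1 : θ < 1) (j m : ℕ)
    (h : NNt p θ hp2 hθ0 hθ1 j ≤ m) : j ≤ acoef p θ m :=
  le_trans (Nat.find_spec (acoef_unbounded hp2 hθ0 hθ1 j))
    (acoef_mono hp2 hθ0 hθ1 h)

lemma algebraMap_single (x : v.integer) :
    algebraMap v.integer (AddMonoidAlgebra v.integer (pPowRat p)) x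
      = AddMonoidAlgebra.single 0 x := by
  have := congrFun (AddMonoidAlgebra.coe_algebraMap (R := v.integer) (A := v.integer)
    (M := pPowRat p)) x
  simpa using this

lemma pi_pow_dvd_single (hp2 : 2 ≤ p) (j a : ℕ) (hja : j ≤ a) (q : pPowRat p) :
    (algebraMap v.integer (AddMonoidAlgebra v.integer (pPowRat p)) (p : v.integer)) ^ j
      ∣ AddMonoidAlgebra.single q ((p : v.integer) ^ a) := by
  refine ⟨AddMonoidAlgebra.single q ((p : v.integer) ^ (a - j)), ?_⟩
  rw [← map_pow, algebraMap_single, AddMonoidAlgebra.single_mul_single, zero_add,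
    ← pow_add, Nat.add_sub_cancel' hja]

/-- the witness partial sums -/
noncomputable def witF (v : Valuation K NNReal) (p : ℕ) (θ : ℝ)
    (hp2 : 2 ≤ p) (hθ0 : 0 < θ) (hθ1 : θ < 1) (j : ℕ) :
    AddMonoidAlgebra v.integer (pPowRat p) :=
  ∑ m ∈ Finset.range (NNt p θ hp2 hθ0 hθ1 j),
    AddMonoidAlgebra.single (qexp p hp2 m) ((p : v.integer) ^ acoef p θ m)

lemma witF_cauchy (v : Valuation K NNReal) (p : ℕ) (θ : ℝ)
    (hp2 : 2 ≤ p) (hθ0 : 0 < θ) (hθ1 : θ < 1) :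
    AdicCompletion.IsAdicCauchy (Iof v p) (AddMonoidAlgebra v.integer (pPowRat p))
      (witF v p θ hp2 hθ0 hθ1) := by
  intro j j' hjj'
  rw [SModEq]
  symm
  rw [Submodule.Quotient.eq]
  have hNle : NNt p θ hp2 hθ0 hθ1 j ≤ NNt p θ hp2 hθ0 hθ1 j' := NNt_mono hp2 hθ0 hθ1 hjj'
  have hsub : witF v p θ hp2 hθ0 hθ1 j' - witF v p θ hp2 hθ0 hθ1 j
      = ∑ m ∈ Finset.Ico (NNt p θ hp2 hθ0 hθ1 j) (NNt p θ hp2 hθ0 hθ1 j'),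
        AddMonoidAlgebra.single (qexp p hp2 m) ((p : v.integer) ^ acoef p θ m) :=
    (Finset.sum_Ico_eq_sub _ hNle).symm
  rw [hsub]
  apply Submodule.sum_mem
  intro m hm
  rw [mem_Ipow_iff]
  exact pi_pow_dvd_single hp2 j (acoef p θ m)
    (NNt_spec hp2 hθ0 hθ1 j m (Finset.mem_Ico.mp hm).1) _

/-- the witness Cauchy sequence -/
noncomputable def witSeq (v : Valuation K NNReal) (p : ℕ) (θ : ℝ)
    (hp2 : 2 ≤ p) (hθ0 : 0 < θ) (hθ1 : θ < 1) :
    AdicCompletion.AdicCauchySequence (Iof v p) (AddMonoidAlgebra v.integer (pPowRat p)) :=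
  ⟨witF v p θ hp2 hθ0 hθ1, witF_cauchy v p θ hp2 hθ0 hθ1⟩

lemma witF_apply_qexp (hp2 : 2 ≤ p) {θ : ℝ} (hθ0 : 0 < θ) (hθ1 : θ < 1) {j m : ℕ}
    (hm : m < NNt p θ hp2 hθ0 hθ1 j) :
    (witF v p θ hp2 hθ0 hθ1 j) (qexp p hp2 m) = (p : v.integer) ^ acoef p θ m := by
  rw [witF, AddMonoidAlgebra.coeff_sum, Finsupp.finset_sum_apply]
  rw [Finset.sum_eq_single m]
  · rw [AddMonoidAlgebra.coeff_single, Finsupp.single_apply, if_pos rfl]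
  · intro b _ hbm
    rw [AddMonoidAlgebra.coeff_single, Finsupp.single_apply, if_neg (fun h => hbm (qexp_injective hp2 h))]
  · intro hmem
    exact absurd (Finset.mem_range.mpr hm) hmem

lemma witF_support (hp2 : 2 ≤ p) {θ : ℝ} (hθ0 : 0 < θ) (hθ1 : θ < 1) (j : ℕ) :
    ∀ q ∈ (witF v p θ hp2 hθ0 hθ1 j).support,
      ∃ m, m < NNt p θ hp2 hθ0 hθ1 j ∧ q = qexp p hp2 m := by
  intro q hq
  by_contra hno
  push_neg at hno
  have hzero : (witF v p θ hp2 hθ0 hθ1 j) q = 0 := by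
    rw [witF, AddMonoidAlgebra.coeff_sum, Finsupp.finset_sum_apply]
    apply Finset.sum_eq_zero
    intro m hm
    rw [AddMonoidAlgebra.coeff_single, Finsupp.single_apply, if_neg]
    intro h
    exact hno m (Finset.mem_range.mp hm) h.symm
  exact Finsupp.mem_support_iff.mp hq hzero

end witdef


section witbounds

variable {v : Valuation K NNReal} {p : ℕ}

lemma wit_term_val (hp0 : 0 < v (p : K)) (hp2 : 2 ≤ p) (θ : ℝ) (k m : ℕ) :
    v (((p : v.integer) ^ acoef p θ m : v.integer) : K) * rq v p k (qexp p hp2 m)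
      = v (p : K) ^ ((acoef p θ m : ℝ) + ((p : ℝ) ^ m)⁻¹ * k) := by
  have hcoe : (((p : v.integer) ^ acoef p θ m : v.integer) : K) = (p : K) ^ acoef p θ m := by
    push_cast; rfl
  have hq : ((qexp p hp2 m : ℚ) : ℝ) = ((p : ℝ) ^ m)⁻¹ := by
    have h1 : (qexp p hp2 m : ℚ) = ((p : ℚ) ^ m)⁻¹ := rfl
    rw [h1]
    push_cast
    ring
  rw [hcoe, map_pow]
  unfold rq
  rw [hq, NNReal.rpow_add hp0.ne', NNReal.rpow_natCast]

lemma wit_gn_le (hp0 : 0 < v (p : K)) (hp1 : v (p : K) < 1) (hp2 : 2 ≤ p) {θ : ℝ}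
    (hθ0 : 0 < θ) (hθ1 : θ < 1) (k j : ℕ) (hk : 1 ≤ k) :
    gn v p k (witF v p θ hp2 hθ0 hθ1 j) ≤ v (p : K) ^ ((k : ℝ) ^ θ) := by
  apply gn_le
  intro q hq
  obtain ⟨m, hm, rfl⟩ := witF_support hp2 hθ0 hθ1 j q hq
  rw [witF_apply_qexp hp2 hθ0 hθ1 hm, wit_term_val hp0 hp2 θ k m]
  apply NNReal.rpow_le_rpow_of_exponent_ge hp0 hp1.le
  exact real_R1 hθ0 hθ1 (by exact_mod_cast hk) (one_le_pow₀ (by exact_mod_cast hp2.trans' one_le_two))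
    (acoef_ge hp2 θ m)

lemma wit_gn_ge (hp0 : 0 < v (p : K)) (hp2 : 2 ≤ p) {θ : ℝ}
    (hθ0 : 0 < θ) (hθ1 : θ < 1) (k j m : ℕ) (hm : m < NNt p θ hp2 hθ0 hθ1 j) :
    v (p : K) ^ ((acoef p θ m : ℝ) + ((p : ℝ) ^ m)⁻¹ * k)
      ≤ gn v p k (witF v p θ hp2 hθ0 hθ1 j) := by
  rw [← wit_term_val hp0 hp2 θ k m]
  have h := term_le_gn (v := v) (p := p) k (witF v p θ hp2 hθ0 hθ1 j) (qexp p hp2 m)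
  rwa [witF_apply_qexp hp2 hθ0 hθ1 hm] at h

lemma wit_Vh_le (hp0 : 0 < v (p : K)) (hp1 : v (p : K) < 1) (hp2 : 2 ≤ p) {θ : ℝ}
    (hθ0 : 0 < θ) (hθ1 : θ < 1) (k : ℕ) (hk : 1 ≤ k) :
    Vh k (AdicCompletion.mk (Iof v p) _ (witSeq v p θ hp2 hθ0 hθ1))
      ≤ v (p : K) ^ ((k : ℝ) ^ θ) := by
  set j := ⌈(k : ℝ) ^ θ⌉₊ with hj
  refine le_trans (Vh_le_capSeq hp0 hp1.le k _ j) ?_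
  rw [capSeq]
  apply max_le
  · exact wit_gn_le hp0 hp1 hp2 hθ0 hθ1 k j hk
  · have h1 : ((k : ℝ) ^ θ) ≤ (j : ℝ) := Nat.le_ceil _
    calc (v (p : K)) ^ j = (v (p : K)) ^ ((j : ℕ) : ℝ) := (NNReal.rpow_natCast _ j).symm
      _ ≤ v (p : K) ^ ((k : ℝ) ^ θ) := NNReal.rpow_le_rpow_of_exponent_ge hp0 hp1.le h1

lemma wit_Vh_ge (hp0 : 0 < v (p : K)) (hp1 : v (p : K) < 1) (hp2 : 2 ≤ p) {θ : ℝ}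
    (hθ0 : 0 < θ) (hθ1 : θ < 1) (k : ℕ) (hk : 1 ≤ k) :
    v (p : K) ^ (((p : ℝ) ^ (θ / (1 - θ)) + 2) * (k : ℝ) ^ θ)
      ≤ Vh k (AdicCompletion.mk (Iof v p) _ (witSeq v p θ hp2 hθ0 hθ1)) := by
  have hp1R : (1 : ℝ) < (p : ℝ) := by exact_mod_cast lt_of_lt_of_le one_lt_two hp2
  obtain ⟨m, hmE⟩ := real_R2 hp1R hθ0 hθ1 (k : ℝ) (by exact_mod_cast hk)
  set C : ℝ := (p : ℝ) ^ (θ / (1 - θ)) + 2 with hCdef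
  set E : ℝ := (acoef p θ m : ℝ) + ((p : ℝ) ^ m)⁻¹ * k with hEdef
  have hE : E ≤ C * (k : ℝ) ^ θ := by
    have h1 : (acoef p θ m : ℝ) ≤ ((p : ℝ) ^ m) ^ (θ / (1 - θ)) + 1 := acoef_le hp2 θ m
    have h2 : E ≤ ((p : ℝ) ^ m) ^ (θ / (1 - θ)) + 1 + ((p : ℝ) ^ m)⁻¹ * k := by
      rw [hEdef]; linarith
    exact le_trans h2 hmE
  set j : ℕ := max (acoef p θ m + 1) (⌈C * (k : ℝ) ^ θ⌉₊ + 1) with hjdef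
  have hmj : m < NNt p θ hp2 hθ0 hθ1 j :=
    (lt_NNt_iff hp2 hθ0 hθ1 j m).mpr
      (lt_of_lt_of_le (Nat.lt_succ_self _) (le_max_left _ _))
  have hgn_ge := wit_gn_ge hp0 hp2 hθ0 hθ1 k j m hmj
  have hEj : E < (j : ℝ) := by
    have h1 : (⌈C * (k : ℝ) ^ θ⌉₊ + 1 : ℕ) ≤ j := le_max_right _ _
    have h2 : ((⌈C * (k : ℝ) ^ θ⌉₊ : ℝ)) + 1 ≤ (j : ℝ) := by exact_mod_cast h1
    have h3 : C * (k : ℝ) ^ θ ≤ (⌈C * (k : ℝ) ^ θ⌉₊ : ℝ) := Nat.le_ceil _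
    linarith
  have hfro : v (p : K) ^ j < gn v p k (witF v p θ hp2 hθ0 hθ1 j) := by
    calc v (p : K) ^ j = v (p : K) ^ ((j : ℕ) : ℝ) := (NNReal.rpow_natCast _ j).symm
      _ < v (p : K) ^ E := NNReal.rpow_lt_rpow_of_exponent_gt hp0 hp1 hEj
      _ ≤ gn v p k (witF v p θ hp2 hθ0 hθ1 j) := hgn_ge
  rw [Vh_frozen hp0 hp1.le k (witSeq v p θ hp2 hθ0 hθ1) j hfro]
  exact le_trans (NNReal.rpow_le_rpow_of_exponent_ge hp0 hp1.le hE) hgn_ge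

lemma wit_mem (hp0 : 0 < v (p : K)) (hp1 : v (p : K) < 1) (hp2 : 2 ≤ p) {θ : ℝ}
    (hθ0 : 0 < θ) (hθ1 : θ < 1) {lam : ℝ} (hlam : lam ≤ θ) :
    AdicCompletion.mk (Iof v p) _ (witSeq v p θ hp2 hθ0 hθ1) ∈ PP hp0 hp1 lam := by
  rw [mem_PP]
  intro s hs0 hsl
  have hsub : {k : ℕ | k < 1}ᶜ ⊆
      {k : ℕ | Vh k (AdicCompletion.mk (Iof v p) _ (witSeq v p θ hp2 hθ0 hθ1))
        ≤ v (p : K) ^ ((k : ℝ) ^ s)} := by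
    intro k hk
    simp only [Set.mem_compl_iff, Set.mem_setOf_eq, not_lt] at hk ⊢
    refine le_trans (wit_Vh_le hp0 hp1 hp2 hθ0 hθ1 k hk)
      (NNReal.rpow_le_rpow_of_exponent_ge hp0 hp1.le ?_)
    exact Real.rpow_le_rpow_of_exponent_le (by exact_mod_cast hk) (by linarith)
  exact Filter.mem_of_superset
    (Set.Finite.compl_mem_hyperfilter (Set.finite_Iio 1)) hsub

lemma wit_notmem (hp0 : 0 < v (p : K)) (hp1 : v (p : K) < 1) (hp2 : 2 ≤ p) {θ : ℝ}
    (hθ0 : 0 < θ) (hθ1 : θ < 1) {mu : ℝ} (hmu : θ < mu) :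
    AdicCompletion.mk (Iof v p) _ (witSeq v p θ hp2 hθ0 hθ1) ∉ PP hp0 hp1 mu := by
  intro hmem
  set s' : ℝ := (θ + mu) / 2 with hs'def
  have hs'0 : 0 < s' := by rw [hs'def]; linarith
  have hs'mu : s' < mu := by rw [hs'def]; linarith
  have hθs' : θ < s' := by rw [hs'def]; linarith
  have hset := (mem_PP _).mp hmem s' hs'0 hs'mu
  set C : ℝ := (p : ℝ) ^ (θ / (1 - θ)) + 2 with hCdef
  have hCpos : 0 < C := by
    have : (0:ℝ) < (p : ℝ) ^ (θ / (1 - θ)) :=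
      Real.rpow_pos_of_pos (by exact_mod_cast lt_of_lt_of_le two_pos hp2) _
    rw [hCdef]; linarith
  obtain ⟨KK, hKK2, hKK⟩ := real_R3 hθs' hCpos
  refine Set.Finite.notMem_hyperfilter (Set.Finite.subset (Set.finite_Iic KK) ?_) hset
  intro k hk
  simp only [Set.mem_setOf_eq] at hk
  by_contra hbig
  simp only [Set.mem_Iic, not_le] at hbig
  have hk1 : 1 ≤ k := le_trans (by norm_num) (le_trans hKK2 hbig.le)
  have hlow := wit_Vh_ge hp0 hp1 hp2 hθ0 hθ1 k hk1
  have hstrict : v (p : K) ^ ((k : ℝ) ^ s') < v (p : K) ^ (C * (k : ℝ) ^ θ) :=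
    NNReal.rpow_lt_rpow_of_exponent_gt hp0 hp1 (hKK k hbig.le)
  exact absurd hk (not_le.mpr (lt_of_lt_of_le hstrict hlow))

lemma PP_strict (hp0 : 0 < v (p : K)) (hp1 : v (p : K) < 1) (hp2 : 2 ≤ p) {α β : ℝ}
    (hα : 0 < α) (hαβ : α < β) (hβ : β < 1) :
    PP hp0 hp1 β < PP hp0 hp1 α := by
  rw [SetLike.lt_iff_le_and_exists]
  refine ⟨PP_antitone hp0 hp1 hαβ.le, ?_⟩
  set θ : ℝ := (α + β) / 2 with hθdef
  have hθ0 : 0 < θ := by rw [hθdef]; linarith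
  have hθ1 : θ < 1 := by rw [hθdef]; linarith
  refine ⟨AdicCompletion.mk (Iof v p) _ (witSeq v p θ hp2 hθ0 hθ1), ?_, ?_⟩
  · exact wit_mem hp0 hp1 hp2 hθ0 hθ1 (by rw [hθdef]; linarith)
  · exact wit_notmem hp0 hp1 hp2 hθ0 hθ1 (by rw [hθdef]; linarith)

end witbounds



variable {K : Type} [Field K] {v : Valuation K NNReal} {p : ℕ}

lemma PP_pow_notmem (hp0 : 0 < v (p : K)) (hp1 : v (p : K) < 1) {lam : ℝ} (hlam : 0 < lam)
    (n : ℕ) :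
    (algebraMap (AddMonoidAlgebra v.integer (pPowRat p))
      (AdicCompletion (Iof v p) (AddMonoidAlgebra v.integer (pPowRat p)))
      (algebraMap v.integer (AddMonoidAlgebra v.integer (pPowRat p)) (p : v.integer))) ^ n
      ∉ PP hp0 hp1 lam := by
  cases n with
  | zero =>
      rw [pow_zero]
      exact PP_one_notmem hp0 hp1 hlam
  | succ n =>
      intro h
      exact PP_pihat_notmem hp0 hp1 hlam
        (((PP_prime hp0 hp1 hlam).pow_mem_iff_mem (n + 1) (Nat.succ_pos n)).mp h)

theorem final_aux (hp : p.Prime) (hp0 : 0 < v (p : K)) (hp1 : v (p : K) < 1) :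
    ∃ P : Set.Ioo (0 : ℝ) 1 →
        Ideal (Localization.Away
          (algebraMap (AddMonoidAlgebra v.integer (pPowRat p))
            (AdicCompletion (Iof v p) (AddMonoidAlgebra v.integer (pPowRat p)))
            (algebraMap v.integer (AddMonoidAlgebra v.integer (pPowRat p)) (p : v.integer)))),
      (∀ l, (P l).IsPrime) ∧
      ∀ l m : Set.Ioo (0 : ℝ) 1, (l : ℝ) < (m : ℝ) → P l < P m := by
  have hp2 : 2 ≤ p := hp.two_le
  set A := AddMonoidAlgebra v.integer (pPowRat p) with hA
  set Rhat := AdicCompletion (Iof v p) A with hRhat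
  set pih : Rhat := algebraMap A Rhat
    (algebraMap v.integer A (p : v.integer)) with hpih
  set Loc := Localization.Away pih with hLoc
  set ord := IsLocalization.orderIsoOfPrime (Submonoid.powers pih) Loc with hord
  have hlam : ∀ l : Set.Ioo (0 : ℝ) 1, 0 < 1 - (l : ℝ) ∧ 1 - (l : ℝ) < 1 := by
    intro l
    obtain ⟨h1, h2⟩ := l.2
    constructor <;> linarith
  have hdisj : ∀ l : Set.Ioo (0 : ℝ) 1,
      Disjoint ((Submonoid.powers pih : Submonoid Rhat) : Set Rhat)
        ((PP hp0 hp1 (1 - (l : ℝ)) : Ideal Rhat) : Set Rhat) := by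
    intro l
    rw [Set.disjoint_left]
    rintro x hx hx2
    obtain ⟨n, rfl⟩ := (Submonoid.mem_powers_iff _ _).mp hx
    exact PP_pow_notmem hp0 hp1 (hlam l).1 n hx2
  refine ⟨fun l => ((ord.symm ⟨PP hp0 hp1 (1 - (l : ℝ)),
      PP_prime hp0 hp1 (hlam l).1, hdisj l⟩) : {q : Ideal Loc // q.IsPrime}).1, ?_, ?_⟩
  · intro l
    exact ((ord.symm ⟨PP hp0 hp1 (1 - (l : ℝ)),
      PP_prime hp0 hp1 (hlam l).1, hdisj l⟩)).2
  · intro l m hlm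
    have hstrict : PP hp0 hp1 (1 - (l : ℝ)) < PP hp0 hp1 (1 - (m : ℝ)) := by
      apply PP_strict hp0 hp1 hp2 (hlam m).1 (by linarith) (hlam l).2
    have hlt : (⟨PP hp0 hp1 (1 - (l : ℝ)), PP_prime hp0 hp1 (hlam l).1, hdisj l⟩ :
        {q : Ideal Rhat // q.IsPrime ∧
          Disjoint ((Submonoid.powers pih : Submonoid Rhat) : Set Rhat) (q : Set Rhat)})
        < ⟨PP hp0 hp1 (1 - (m : ℝ)), PP_prime hp0 hp1 (hlam m).1, hdisj m⟩ := by
      exact Subtype.mk_lt_mk.mpr hstrict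
    exact Subtype.coe_lt_coe.mpr (ord.symm.lt_iff_lt.mpr hlt)

end PTA3

/-- the perfectoid Tate algebra `K⟨x^{1/p^∞}⟩` over a perfectoid field `K`
of characteristic `0` and residue characteristic `p` — the localization away from `p` of
the `p`-adic completion of the monoid algebra `O_K[x^{1/p^∞}]` — has a strictly increasing
chain of prime ideals indexed by the real interval `(0,1)`; in particular it has
uncountable Krull dimension. -/
theorem perfectoidTateAlgebra_char_zero_uncountable_chain_of_primes
    (p : ℕ) (hp : p.Prime) (K : Type) [Field K] [CharZero K]
    (v : Valuation K NNReal)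
    (hp0 : 0 < v (p : K)) (hp1 : v (p : K) < 1)
    (hcomplete : ∀ f : ℕ → K,
      (∀ ε : NNReal, 0 < ε → ∃ N : ℕ, ∀ m ≥ N, ∀ n ≥ N, v (f m - f n) < ε) →
      ∃ L : K, ∀ ε : NNReal, 0 < ε → ∃ N : ℕ, ∀ n ≥ N, v (f n - L) < ε)
    (hdense : ∀ a b : NNReal, 0 < a → a < b → ∃ x : K, x ≠ 0 ∧ a < v x ∧ v x < b)
    (hFrobSurj : ∀ a : v.integer, ∃ b : v.integer, v ((b : K) ^ p - (a : K)) ≤ v (p : K)) :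
    ∃ P : Set.Ioo (0 : ℝ) 1 →
        Ideal (Localization.Away
          (algebraMap (AddMonoidAlgebra v.integer (pPowRat p))
            (AdicCompletion
              (Ideal.span {algebraMap v.integer
                (AddMonoidAlgebra v.integer (pPowRat p)) (p : v.integer)})
              (AddMonoidAlgebra v.integer (pPowRat p)))
            (algebraMap v.integer (AddMonoidAlgebra v.integer (pPowRat p)) (p : v.integer)))),
      (∀ l, (P l).IsPrime) ∧
      ∀ l m : Set.Ioo (0 : ℝ) 1, (l : ℝ) < (m : ℝ) → P l < P m := by
  exact PTA3.final_aux hp hp0 hp1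
end

section
/- Let F be a field equipped with a rank-one valuation v : F → ℝ≥0 (multiplicative, v(x) = 0 ↔ x = 0, v(x+y) ≤ max(v x, v y)) whose value group v(F^×) is a dense (nondiscrete) subgroup of ℝ_{>0}, and let V = {x ∈ F : v x ≤ 1} be its valuation ring. Then the formal power series ring V[[x]] admits a family (𝔭_λ)_{λ∈(0,1)} of prime ideals, indexed by the real interval (0,1), with 𝔭_λ ⊊ 𝔭_μ whenever λ < μ; in particular V[[x]] has uncountable Krull dimension. -/
open Filter PowerSeries Finset

namespace PSUC

/-- `ee y = 2 ^ y` as a real power. -/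
noncomputable def ee (y : ℝ) : ℝ := (2 : ℝ) ^ y

lemma ee_pos (y : ℝ) : 0 < ee y := Real.rpow_pos_of_pos two_pos y

lemma ee_nonneg (y : ℝ) : 0 ≤ ee y := (ee_pos y).le

lemma ee_add (y z : ℝ) : ee (y + z) = ee y * ee z := Real.rpow_add two_pos y z

lemma ee_le_ee {y z : ℝ} : ee y ≤ ee z ↔ y ≤ z :=
  Real.rpow_le_rpow_left_iff one_lt_two

/-- `half = 1/2` in `ℝ≥0`. -/
noncomputable def half : NNReal := 2⁻¹

lemma half_pos : (0 : NNReal) < half := by norm_num [half]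

lemma half_ne_zero : half ≠ 0 := half_pos.ne'

lemma half_lt_one : half < 1 := by
  rw [half, ← NNReal.coe_lt_coe]
  norm_num

lemma half_le_one : half ≤ 1 := half_lt_one.le

/-- `hpow y = (1/2) ^ y` in `ℝ≥0` (real exponent). -/
noncomputable def hpow (y : ℝ) : NNReal := half ^ y

lemma hpow_pos (y : ℝ) : 0 < hpow y := NNReal.rpow_pos half_pos

lemma hpow_ne_zero (y : ℝ) : hpow y ≠ 0 := (hpow_pos y).ne'

lemma hpow_add (y z : ℝ) : hpow (y + z) = hpow y * hpow z :=
  NNReal.rpow_add half_ne_zero y z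

lemma hpow_anti {y z : ℝ} (h : y ≤ z) : hpow z ≤ hpow y :=
  NNReal.rpow_le_rpow_of_exponent_ge half_pos half_le_one h

lemma hpow_lt_one {y : ℝ} (h : 0 < y) : hpow y < 1 :=
  NNReal.rpow_lt_one half_lt_one h

lemma hpow_le_one {y : ℝ} (h : 0 ≤ y) : hpow y ≤ 1 :=
  NNReal.rpow_le_one half_le_one h

lemma hpow_strict_anti {y z : ℝ} (h : y < z) : hpow z < hpow y :=
  NNReal.rpow_lt_rpow_of_exponent_gt half_pos half_lt_one h

lemma hpow_pow (y : ℝ) (n : ℕ) : hpow y ^ n = hpow (y * n) := by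
  rw [hpow, hpow, NNReal.rpow_mul, NNReal.rpow_natCast]

/-- The radius at scale `k` : `(1/2) ^ (2^(-k))`. -/
noncomputable def rho (k : ℕ) : NNReal := hpow (ee (-(k : ℝ)))

lemma rho_pos (k : ℕ) : 0 < rho k := hpow_pos _

lemma rho_lt_one (k : ℕ) : rho k < 1 := hpow_lt_one (ee_pos _)

lemma rho_pow (k : ℕ) (n : ℕ) : rho k ^ n = hpow (ee (-(k : ℝ)) * n) := hpow_pow _ n

/-- The threshold exponent at scale `k`, level `l` : `2^(-k*l)`. -/
noncomputable def th (k : ℕ) (l : ℝ) : ℝ := ee (-(k : ℝ) * l)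

lemma th_pos (k : ℕ) (l : ℝ) : 0 < th k l := ee_pos _

lemma th_anti {k : ℕ} {l m : ℝ} (h : l ≤ m) : th k m ≤ th k l := by
  rw [th, th, ee_le_ee]
  have : (0 : ℝ) ≤ (k : ℝ) := Nat.cast_nonneg k
  nlinarith

variable {F : Type} [Field F] (v : Valuation F NNReal)

/-- Valuation of the `n`-th coefficient. -/
noncomputable def cf (f : PowerSeries v.integer) (n : ℕ) : NNReal :=
  v ((PowerSeries.coeff n f : v.integer) : F)

lemma cf_le_one (f : PowerSeries v.integer) (n : ℕ) : cf v f n ≤ 1 := by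
  rw [cf]
  exact (Valuation.mem_integer_iff v _).mp (SetLike.coe_mem _)

lemma cf_zero (n : ℕ) : cf v (0 : PowerSeries v.integer) n = 0 := by
  simp [cf]

lemma cf_pos_of_ne (f : PowerSeries v.integer) (hf : f ≠ 0) : ∃ n, 0 < cf v f n := by
  by_contra h
  push_neg at h
  apply hf
  apply PowerSeries.ext
  intro n
  have h0 : cf v f n = 0 := le_antisymm (h n) (zero_le)
  have h1 : ((PowerSeries.coeff n f : v.integer) : F) = 0 :=
    (Valuation.zero_iff v).mp h0
  rw [map_zero]
  exact Subtype.ext h1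

/-- The set of scales at which all Gauss weights of `f` are below the `(ε, l)`-threshold. -/
def pSet (l : ℝ) (ε : NNReal) (f : PowerSeries v.integer) : Set ℕ :=
  {k | ∀ n, cf v f n * rho k ^ n ≤ ε ^ th k l}

/-- The ideal `𝔭_l`. -/
noncomputable def pIdeal (l : ℝ) : Ideal (PowerSeries v.integer) where
  carrier := {f | ∀ ε : NNReal, 0 < ε → ε < 1 → pSet v l ε f ∈ hyperfilter ℕ}
  zero_mem' := by
    intro ε hε0 hε1
    have : pSet v l ε (0 : PowerSeries v.integer) = Set.univ := by
      apply Set.eq_univ_of_forall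
      intro k n
      simp [cf_zero]
    rw [this]
    exact Filter.univ_mem
  add_mem' := by
    intro f g hf hg ε hε0 hε1
    filter_upwards [hf ε hε0 hε1, hg ε hε0 hε1] with k hkf hkg
    intro n
    have hadd : cf v (f + g) n ≤ max (cf v f n) (cf v g n) := by
      have : ((PowerSeries.coeff n (f + g) : v.integer) : F)
          = ((PowerSeries.coeff n f : v.integer) : F)
            + ((PowerSeries.coeff n g : v.integer) : F) := by
        push_cast [map_add]
        ring
      rw [cf, this]
      exact v.map_add _ _
    rcases max_cases (cf v f n) (cf v g n) with ⟨hmax, _⟩ | ⟨hmax, _⟩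
    · calc cf v (f + g) n * rho k ^ n ≤ cf v f n * rho k ^ n := by
            apply mul_le_mul_left
            rw [hmax] at hadd
            exact hadd
        _ ≤ _ := hkf n
    · calc cf v (f + g) n * rho k ^ n ≤ cf v g n * rho k ^ n := by
            apply mul_le_mul_left
            rw [hmax] at hadd
            exact hadd
        _ ≤ _ := hkg n
  smul_mem' := by
    intro c f hf ε hε0 hε1
    filter_upwards [hf ε hε0 hε1] with k hk
    intro n
    rw [smul_eq_mul]
    set T := ε ^ th k l with hT
    have hTn : ∀ j ≤ n, cf v f j ≤ T / rho k ^ n := by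
      intro j hj
      have h1 : cf v f j * rho k ^ j ≤ T := hk j
      have h2 : cf v f j ≤ T / rho k ^ j :=
        (le_div_iff₀ (pow_pos (rho_pos k) j)).mpr h1
      refine h2.trans ?_
      apply div_le_div_of_nonneg_left ?_ (pow_pos (rho_pos k) n) ?_
      · exact zero_le
      · exact pow_le_pow_right_of_le_one' (rho_lt_one k).le hj
    have hsum : cf v (c * f) n ≤ T / rho k ^ n := by
      rw [cf, PowerSeries.coeff_mul]
      have : ((∑ p ∈ antidiagonal n,
          PowerSeries.coeff p.1 c * PowerSeries.coeff p.2 f : v.integer) : F)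
          = ∑ p ∈ antidiagonal n,
            ((PowerSeries.coeff p.1 c : v.integer) : F)
              * ((PowerSeries.coeff p.2 f : v.integer) : F) := by
        push_cast
        rfl
      rw [this]
      apply Valuation.map_sum_le
      intro p hp
      rw [Finset.HasAntidiagonal.mem_antidiagonal] at hp
      rw [v.map_mul]
      calc v ((PowerSeries.coeff p.1 c : v.integer) : F)
            * v ((PowerSeries.coeff p.2 f : v.integer) : F)
          ≤ 1 * (T / rho k ^ n) := by
            apply mul_le_mul'
            · exact cf_le_one v c p.1
            · exact hTn p.2 (by omega)
        _ = T / rho k ^ n := one_mul _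
    calc cf v (c * f) n * rho k ^ n ≤ (T / rho k ^ n) * rho k ^ n :=
          mul_le_mul_left hsum _
      _ = T := by
          rw [div_mul_cancel₀]
          exact pow_ne_zero n (rho_pos k).ne'

lemma mem_pIdeal_iff {l : ℝ} {f : PowerSeries v.integer} :
    f ∈ pIdeal v l ↔ ∀ ε : NNReal, 0 < ε → ε < 1 → pSet v l ε f ∈ hyperfilter ℕ :=
  Iff.rfl

/-- Least-index argmax of the Gauss weights. -/
lemma exists_argmax (f : PowerSeries v.integer) (hf : f ≠ 0) {r : NNReal}
    (hr0 : 0 < r) (hr1 : r < 1) :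
    ∃ P, 0 < cf v f P ∧ (∀ n, cf v f n * r ^ n ≤ cf v f P * r ^ P) ∧
      (∀ i, i < P → cf v f i * r ^ i < cf v f P * r ^ P) := by
  classical
  obtain ⟨n₀, hn₀⟩ := cf_pos_of_ne v f hf
  set m : NNReal := cf v f n₀ * r ^ n₀ with hm
  have hmpos : 0 < m := mul_pos hn₀ (pow_pos hr0 _)
  obtain ⟨N, hN⟩ := exists_pow_lt_of_lt_one hmpos hr1
  -- all indices beyond N + n₀ have weight < m
  have hbig : ∀ n, N + n₀ + 1 ≤ n → cf v f n * r ^ n < m := by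
    intro n hn
    calc cf v f n * r ^ n ≤ 1 * r ^ n := mul_le_mul_left (cf_le_one v f n) _
      _ = r ^ n := one_mul _
      _ ≤ r ^ N := pow_le_pow_right_of_le_one' hr1.le (by omega)
      _ < m := hN
  -- max over the finite range
  obtain ⟨P₀, hP₀mem, hP₀max⟩ :=
    Finset.exists_max_image (Finset.range (N + n₀ + 1)) (fun n => cf v f n * r ^ n)
      ⟨n₀, Finset.mem_range.mpr (by omega)⟩
  have hglobal : ∀ n, cf v f n * r ^ n ≤ cf v f P₀ * r ^ P₀ := by
    intro n
    by_cases hn : n < N + n₀ + 1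
    · exact hP₀max n (Finset.mem_range.mpr hn)
    · have : cf v f n * r ^ n < m := hbig n (by omega)
      exact this.le.trans (hP₀max n₀ (Finset.mem_range.mpr (by omega)))
  -- least index with the global max property
  have hex : ∃ P, ∀ n, cf v f n * r ^ n ≤ cf v f P * r ^ P := ⟨P₀, hglobal⟩
  set P := Nat.find hex with hP
  have hPmax : ∀ n, cf v f n * r ^ n ≤ cf v f P * r ^ P := Nat.find_spec hex
  have hPleast : ∀ i, i < P → cf v f i * r ^ i < cf v f P * r ^ P := by
    intro i hi
    have := Nat.find_min hex hi
    push_neg at this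
    obtain ⟨j, hj⟩ := this
    exact lt_of_lt_of_le hj (hPmax j)
  have hPpos : 0 < cf v f P := by
    by_contra h
    push_neg at h
    have h0 : cf v f P = 0 := le_antisymm h (zero_le)
    have := hPmax n₀
    rw [h0, zero_mul] at this
    exact absurd (lt_of_lt_of_le hmpos this) (lt_irrefl 0)
  exact ⟨P, hPpos, hPmax, hPleast⟩

/-- Gauss multiplicativity at the least argmax indices : no cancellation. -/
lemma gauss_mul (f g : PowerSeries v.integer) (hf : f ≠ 0) (hg : g ≠ 0) {r : NNReal}
    (hr0 : 0 < r) (hr1 : r < 1) :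
    ∃ P Q, (∀ n, cf v f n * r ^ n ≤ cf v f P * r ^ P) ∧
      (∀ n, cf v g n * r ^ n ≤ cf v g Q * r ^ Q) ∧
      cf v (f * g) (P + Q) = cf v f P * cf v g Q := by
  classical
  obtain ⟨P, hPpos, hPmax, hPleast⟩ := exists_argmax v f hf hr0 hr1
  obtain ⟨Q, hQpos, hQmax, hQleast⟩ := exists_argmax v g hg hr0 hr1
  refine ⟨P, Q, hPmax, hQmax, ?_⟩
  have hcoeff : ((PowerSeries.coeff (P + Q) (f * g) : v.integer) : F)
      = ∑ p ∈ antidiagonal (P + Q),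
          ((PowerSeries.coeff p.1 f : v.integer) : F)
            * ((PowerSeries.coeff p.2 g : v.integer) : F) := by
    rw [PowerSeries.coeff_mul]
    push_cast
    rfl
  rw [cf, hcoeff]
  have hmem : ((P, Q) : ℕ × ℕ) ∈ antidiagonal (P + Q) := Finset.HasAntidiagonal.mem_antidiagonal.mpr rfl
  have hval : ∀ p : ℕ × ℕ, v (((PowerSeries.coeff p.1 f : v.integer) : F)
      * ((PowerSeries.coeff p.2 g : v.integer) : F)) = cf v f p.1 * cf v g p.2 := by
    intro p
    rw [v.map_mul]
    rfl
  have h0 : v (((PowerSeries.coeff (P, Q).1 f : v.integer) : F)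
      * ((PowerSeries.coeff (P, Q).2 g : v.integer) : F)) ≠ 0 := by
    rw [hval]
    exact (mul_pos hPpos hQpos).ne'
  have hlt : ∀ p ∈ antidiagonal (P + Q), p ≠ ((P, Q) : ℕ × ℕ) →
      v (((PowerSeries.coeff p.1 f : v.integer) : F)
        * ((PowerSeries.coeff p.2 g : v.integer) : F))
      < v (((PowerSeries.coeff (P, Q).1 f : v.integer) : F)
        * ((PowerSeries.coeff (P, Q).2 g : v.integer) : F)) := by
    intro p hpA' hpne
    have hpA : p.1 + p.2 = P + Q := Finset.HasAntidiagonal.mem_antidiagonal.mp hpA'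
    rw [hval, hval]
    have hrPQ : (0 : NNReal) < r ^ (P + Q) := pow_pos hr0 _
    have key : (cf v f p.1 * cf v g p.2) * r ^ (P + Q) <
        (cf v f P * cf v g Q) * r ^ (P + Q) := by
      have hsplit : (cf v f p.1 * cf v g p.2) * r ^ (P + Q)
          = (cf v f p.1 * r ^ p.1) * (cf v g p.2 * r ^ p.2) := by
        rw [← hpA, pow_add]
        ring
      have hsplit' : (cf v f P * cf v g Q) * r ^ (P + Q)
          = (cf v f P * r ^ P) * (cf v g Q * r ^ Q) := by
        rw [pow_add]
        ring
      rw [hsplit, hsplit']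
      rcases lt_trichotomy p.1 P with h1 | h1 | h1
      · -- p.1 < P : strict on the left factor
        calc (cf v f p.1 * r ^ p.1) * (cf v g p.2 * r ^ p.2)
            ≤ (cf v f p.1 * r ^ p.1) * (cf v g Q * r ^ Q) :=
              mul_le_mul_right (hQmax p.2) _
          _ < (cf v f P * r ^ P) * (cf v g Q * r ^ Q) :=
              mul_lt_mul_of_pos_right (hPleast p.1 h1) (mul_pos hQpos (pow_pos hr0 _))
      · exfalso
        exact hpne (Prod.ext_iff.mpr ⟨h1, by omega⟩)
      · -- p.1 > P forces p.2 < Q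
        have h2 : p.2 < Q := by omega
        calc (cf v f p.1 * r ^ p.1) * (cf v g p.2 * r ^ p.2)
            ≤ (cf v f P * r ^ P) * (cf v g p.2 * r ^ p.2) :=
              mul_le_mul_left (hPmax p.1) _
          _ < (cf v f P * r ^ P) * (cf v g Q * r ^ Q) :=
              mul_lt_mul_of_pos_left (hQleast p.2 h2) (mul_pos hPpos (pow_pos hr0 _))
    exact lt_of_mul_lt_mul_right key (zero_le)
  rw [Valuation.map_sum_eq_of_lt (v := v) (s := antidiagonal (P + Q)) (j := ((P, Q) : ℕ × ℕ)) hmem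
    (fun p hp => by
      have h1 : p ∈ antidiagonal (P + Q) ∧ p ≠ ((P, Q) : ℕ × ℕ) := by
        simpa using hp
      exact hlt p h1.1 h1.2), hval]

lemma pIdeal_isPrime (l : ℝ) : (pIdeal v l).IsPrime := by
  constructor
  · -- ≠ ⊤
    intro htop
    have h1 : (1 : PowerSeries v.integer) ∈ pIdeal v l := htop ▸ Submodule.mem_top
    have := h1 half half_pos half_lt_one
    have hempty : pSet v l half (1 : PowerSeries v.integer) = ∅ := by
      ext k
      simp only [pSet, Set.mem_setOf_eq, Set.mem_empty_iff_false, iff_false]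
      push_neg
      refine ⟨0, ?_⟩
      have hcf : cf v (1 : PowerSeries v.integer) 0 = 1 := by
        simp [cf]
      rw [hcf, pow_zero, mul_one]
      exact hpow_lt_one (th_pos k l)
    rw [hempty] at this
    exact (Filter.empty_notMem _) this
  · intro f g hfg
    by_contra h
    push_neg at h
    obtain ⟨hf, hg⟩ := h
    have hf0 : f ≠ 0 := by rintro rfl; exact hf (Submodule.zero_mem _)
    have hg0 : g ≠ 0 := by rintro rfl; exact hg (Submodule.zero_mem _)
    rw [mem_pIdeal_iff] at hf hg
    push_neg at hf hg
    obtain ⟨ε₁, hε₁0, hε₁1, hSf⟩ := hf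
    obtain ⟨ε₂, hε₂0, hε₂1, hSg⟩ := hg
    have hε0 : 0 < ε₁ * ε₂ := mul_pos hε₁0 hε₂0
    have hε1 : ε₁ * ε₂ < 1 :=
      lt_of_le_of_lt (mul_le_of_le_one_right (zero_le) hε₂1.le) hε₁1
    have hS : pSet v l (ε₁ * ε₂) (f * g) ∈ hyperfilter ℕ := hfg (ε₁ * ε₂) hε0 hε1
    have hC1 : (pSet v l ε₁ f)ᶜ ∈ hyperfilter ℕ :=
      Ultrafilter.compl_mem_iff_notMem.mpr hSf
    have hC2 : (pSet v l ε₂ g)ᶜ ∈ hyperfilter ℕ :=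
      Ultrafilter.compl_mem_iff_notMem.mpr hSg
    have hinter : pSet v l (ε₁ * ε₂) (f * g) ∩ ((pSet v l ε₁ f)ᶜ ∩ (pSet v l ε₂ g)ᶜ)
        ∈ hyperfilter ℕ := Filter.inter_mem hS (Filter.inter_mem hC1 hC2)
    obtain ⟨k, hk⟩ := Filter.nonempty_of_mem hinter
    obtain ⟨hkS, hk1, hk2⟩ := hk
    simp only [pSet, Set.mem_compl_iff, Set.mem_setOf_eq, not_forall, not_le] at hk1 hk2
    obtain ⟨n₁, hn₁⟩ := hk1
    obtain ⟨n₂, hn₂⟩ := hk2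
    obtain ⟨P, Q, hPmax, hQmax, heq⟩ := gauss_mul v f g hf0 hg0 (rho_pos k) (rho_lt_one k)
    have h1 : ε₁ ^ th k l < cf v f P * rho k ^ P := lt_of_lt_of_le hn₁ (hPmax n₁)
    have h2 : ε₂ ^ th k l < cf v g Q * rho k ^ Q := lt_of_lt_of_le hn₂ (hQmax n₂)
    have hbig : (ε₁ * ε₂) ^ th k l < cf v (f * g) (P + Q) * rho k ^ (P + Q) := by
      rw [NNReal.mul_rpow, heq, pow_add]
      calc ε₁ ^ th k l * ε₂ ^ th k l
          < (cf v f P * rho k ^ P) * (cf v g Q * rho k ^ Q) := by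
            apply mul_lt_mul'' h1 h2 (zero_le) (zero_le)
        _ = cf v f P * cf v g Q * (rho k ^ P * rho k ^ Q) := by ring
    exact absurd (hkS (P + Q)) (not_le.mpr hbig)

lemma pIdeal_mono {l m : ℝ} (h : l ≤ m) : pIdeal v l ≤ pIdeal v m := by
  intro f hf ε hε0 hε1
  rw [mem_pIdeal_iff] at hf
  filter_upwards [hf ε hε0 hε1] with k hk
  intro n
  exact (hk n).trans (NNReal.rpow_le_rpow_of_exponent_ge hε0 hε1.le (th_anti h))


lemma ee_nat_mul (c : ℝ) (k : ℕ) : ee ((k : ℝ) * c) = ee c ^ k := by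
  rw [ee, ee, ← Real.rpow_natCast ((2 : ℝ) ^ c) k,
    ← Real.rpow_mul (by norm_num : (0 : ℝ) ≤ 2), mul_comm]

lemma ee_lt_ee_iff {y z : ℝ} : ee y < ee z ↔ y < z :=
  Real.rpow_lt_rpow_left_iff one_lt_two

lemma ee_lt_one {y : ℝ} (h : y < 0) : ee y < 1 := by
  have : ee y < ee 0 := ee_lt_ee_iff.mpr h
  simpa [ee, Real.rpow_zero] using this

lemma mem_hyper_of_eventually {s : Set ℕ} (h : ∀ᶠ k in atTop, k ∈ s) :
    s ∈ hyperfilter ℕ := by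
  apply Filter.hyperfilter_le_cofinite
  rwa [Nat.cofinite_eq_atTop]

/-- Support indices of the witness series. -/
noncomputable def nIdx (δ : ℝ) (j : ℕ) : ℕ := j + ⌈ee ((j : ℝ) * (1 - δ))⌉₊

lemma nIdx_strictMono {δ : ℝ} (hδ1 : δ < 1) : StrictMono (nIdx δ) := by
  apply strictMono_nat_of_lt_succ
  intro j
  have hmono : ⌈ee ((j : ℝ) * (1 - δ))⌉₊ ≤ ⌈ee (((j : ℕ) + 1 : ℕ) * (1 - δ))⌉₊ := by
    apply Nat.ceil_le_ceil
    rw [ee_le_ee]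
    have h1 : (0 : ℝ) ≤ 1 - δ := by linarith
    have h2 : ((j : ℕ) : ℝ) ≤ (((j : ℕ) + 1 : ℕ) : ℝ) := by push_cast; linarith
    nlinarith
  unfold nIdx
  omega

lemma nIdx_ge {δ : ℝ} (j : ℕ) : ee ((j : ℝ) * (1 - δ)) ≤ (nIdx δ j : ℝ) := by
  unfold nIdx
  push_cast
  have := Nat.le_ceil (ee ((j : ℝ) * (1 - δ)))
  have : (0:ℝ) ≤ (j:ℝ) := Nat.cast_nonneg j
  have h2 := Nat.le_ceil (ee ((j : ℝ) * (1 - δ)))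
  linarith

lemma nIdx_le {δ : ℝ} (j : ℕ) : (nIdx δ j : ℝ) ≤ (j : ℝ) + ee ((j : ℝ) * (1 - δ)) + 1 := by
  unfold nIdx
  push_cast
  have := (Nat.ceil_lt_add_one (ee_nonneg ((j : ℝ) * (1 - δ)))).le
  linarith

lemma exists_witness
    (hdense : ∀ a b : NNReal, 0 < a → a < b → ∃ x : F, x ≠ 0 ∧ a < v x ∧ v x < b)
    {δ : ℝ} (hδ0 : 0 < δ) (hδ1 : δ < 1) :
    ∃ f : PowerSeries v.integer,
      (∀ a : ℝ, δ < a → f ∈ pIdeal v a) ∧ (∀ b : ℝ, b < δ → f ∉ pIdeal v b) := by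
  classical
  -- choose coefficients
  have hx : ∀ j : ℕ, ∃ x : F, x ≠ 0 ∧
      hpow (2 * ee (-(j : ℝ) * δ)) < v x ∧ v x < hpow (ee (-(j : ℝ) * δ)) := by
    intro j
    apply hdense _ _ (hpow_pos _)
    apply hpow_strict_anti
    have := ee_pos (-(j : ℝ) * δ)
    linarith
  choose x hx0 hx1 hx2 using hx
  have hxint : ∀ j, x j ∈ v.integer := by
    intro j
    exact (Valuation.mem_integer_iff v _).mpr
      ((hx2 j).le.trans (hpow_le_one (ee_nonneg _)))
  set f : PowerSeries v.integer := PowerSeries.mk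
    (fun n => if h : ∃ j, nIdx δ j = n then ⟨x h.choose, hxint _⟩ else 0) with hf
  have hinj : Function.Injective (nIdx δ) := (nIdx_strictMono hδ1).injective
  have hcf_idx : ∀ j, cf v f (nIdx δ j) = v (x j) := by
    intro j
    have hex : ∃ i, nIdx δ i = nIdx δ j := ⟨j, rfl⟩
    rw [cf, hf, PowerSeries.coeff_mk, dif_pos hex]
    have : hex.choose = j := hinj hex.choose_spec
    rw [this]
  have hcf_nin : ∀ n, (¬ ∃ j, nIdx δ j = n) → cf v f n = 0 := by
    intro n hn
    rw [cf, hf, PowerSeries.coeff_mk, dif_neg hn]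
    simp
  refine ⟨f, ?_, ?_⟩
  · -- membership in pIdeal a for δ < a
    intro a hδa
    rw [mem_pIdeal_iff]
    intro ε hε0 hε1
    obtain ⟨N, hN⟩ := exists_pow_lt_of_lt_one hε0 half_lt_one
    have hthr : ∀ k, hpow ((N : ℝ) * th k a) ≤ ε ^ th k a := by
      intro k
      have h1 : (half ^ N : NNReal) ≤ ε := hN.le
      have h2 : hpow ((N : ℝ) * th k a) = (half ^ N : NNReal) ^ th k a := by
        rw [hpow, ← NNReal.rpow_natCast half N, ← NNReal.rpow_mul]
      rw [h2]
      exact NNReal.rpow_le_rpow h1 (th_pos k a).le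
    apply mem_hyper_of_eventually
    have hgrow : Tendsto (fun k : ℕ => ee (a - δ) ^ k) atTop atTop :=
      tendsto_pow_atTop_atTop_of_one_lt
        (by
          have : ee 0 < ee (a - δ) := ee_lt_ee_iff.mpr (by linarith)
          simpa [ee, Real.rpow_zero] using this)
    filter_upwards [hgrow.eventually_ge_atTop (N : ℝ)] with k hk
    show ∀ n, cf v f n * rho k ^ n ≤ ε ^ th k a
    intro n
    by_cases h : ∃ j, nIdx δ j = n
    · obtain ⟨j, rfl⟩ := h
      -- key real inequality
      have hkey : (N : ℝ) * th k a ≤ ee (-(j : ℝ) * δ) + ee (-(k : ℝ)) * (nIdx δ j) := by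
        have hNk : (N : ℝ) ≤ ee ((k : ℝ) * (a - δ)) := by rwa [ee_nat_mul]
        have hstep : (N : ℝ) * th k a ≤ ee (-(k : ℝ) * δ) := by
          have h3 : (N : ℝ) * th k a ≤ ee ((k : ℝ) * (a - δ)) * th k a := by
            apply mul_le_mul_of_nonneg_right hNk (ee_nonneg _)
          have h4 : ee ((k : ℝ) * (a - δ)) * th k a = ee (-(k : ℝ) * δ) := by
            rw [th, ← ee_add]
            ring_nf
          linarith
        rcases le_total j k with hjk | hjk
        · have h5 : ee (-(k : ℝ) * δ) ≤ ee (-(j : ℝ) * δ) := by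
            rw [ee_le_ee]
            have : (j : ℝ) ≤ (k : ℝ) := Nat.cast_le.mpr hjk
            nlinarith
          have h6 : (0 : ℝ) ≤ ee (-(k : ℝ)) * (nIdx δ j) :=
            mul_nonneg (ee_nonneg _) (Nat.cast_nonneg _)
          linarith
        · have h5 : ee (-(k : ℝ) * δ) ≤ ee (-(k : ℝ)) * (nIdx δ j) := by
            calc ee (-(k : ℝ) * δ) ≤ ee ((j : ℝ) * (1 - δ) + -(k : ℝ)) := by
                  rw [ee_le_ee]
                  have : (k : ℝ) ≤ (j : ℝ) := Nat.cast_le.mpr hjk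
                  nlinarith
              _ = ee (-(k : ℝ)) * ee ((j : ℝ) * (1 - δ)) := by rw [ee_add]; ring
              _ ≤ ee (-(k : ℝ)) * (nIdx δ j) :=
                  mul_le_mul_of_nonneg_left (nIdx_ge j) (ee_nonneg _)
          have h6 : (0 : ℝ) ≤ ee (-(j : ℝ) * δ) := ee_nonneg _
          linarith
      calc cf v f (nIdx δ j) * rho k ^ (nIdx δ j)
          ≤ hpow (ee (-(j : ℝ) * δ)) * hpow (ee (-(k : ℝ)) * (nIdx δ j)) := by
            rw [rho_pow, hcf_idx j]
            exact mul_le_mul_left (hx2 j).le _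
        _ = hpow (ee (-(j : ℝ) * δ) + ee (-(k : ℝ)) * (nIdx δ j)) := (hpow_add _ _).symm
        _ ≤ hpow ((N : ℝ) * th k a) := hpow_anti hkey
        _ ≤ ε ^ th k a := hthr k
    · rw [hcf_nin n h, zero_mul]
      exact zero_le
  · -- non-membership in pIdeal b for b < δ
    intro b hbδ hmem
    rw [mem_pIdeal_iff] at hmem
    have hS : pSet v b half f ∈ hyperfilter ℕ := hmem half half_pos half_lt_one
    have hcompl : (pSet v b half f)ᶜ ∈ hyperfilter ℕ := by
      apply mem_hyper_of_eventually
      -- eventual bounds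
      set r : ℝ := ee (b - 1) with hr
      have hr0 : 0 < r := ee_pos _
      have hr1 : r < 1 := ee_lt_one (by linarith)
      have hsum : Summable (fun k : ℕ => (k : ℝ) ^ 1 * r ^ k) :=
        summable_pow_mul_geometric_of_norm_lt_one 1
          (by rwa [Real.norm_eq_abs, abs_of_pos hr0])
      have h1 : Tendsto (fun k : ℕ => (k : ℝ) * r ^ k) atTop (nhds 0) := by
        have := hsum.tendsto_atTop_zero
        simpa using this
      have h2 : Tendsto (fun k : ℕ => r ^ k) atTop (nhds 0) :=
        tendsto_pow_atTop_nhds_zero_of_lt_one hr0.le hr1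
      have h3 : Tendsto (fun k : ℕ => ((k : ℝ) + 1) * r ^ k) atTop (nhds 0) := by
        have := h1.add h2
        simpa [add_mul] using this
      have hsix : Tendsto (fun k : ℕ => ee (δ - b) ^ k) atTop atTop :=
        tendsto_pow_atTop_atTop_of_one_lt
          (by
            have : ee 0 < ee (δ - b) := ee_lt_ee_iff.mpr (by linarith)
            simpa [ee, Real.rpow_zero] using this)
      filter_upwards [h3.eventually (gt_mem_nhds (by norm_num : (0:ℝ) < 1/2)),
        hsix.eventually_ge_atTop 6] with k hk3 hk6
      -- show k ∉ pSet
      intro hkmem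
      have hineq := hkmem (nIdx δ k)
      -- the real exponent inequality
      have hkey : 2 * ee (-(k : ℝ) * δ) + ee (-(k : ℝ)) * (nIdx δ k) ≤ th k b := by
        have hb1 : ee (-(k : ℝ)) * (nIdx δ k) ≤
            ((k : ℝ) + 1) * ee (-(k : ℝ)) + ee (-(k : ℝ) * δ) := by
          have h4 := nIdx_le (δ := δ) k
          have h5 : ee (-(k : ℝ)) * ee ((k : ℝ) * (1 - δ)) = ee (-(k : ℝ) * δ) := by
            rw [← ee_add]; ring_nf
          have h6 : (0 : ℝ) < ee (-(k : ℝ)) := ee_pos _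
          calc ee (-(k : ℝ)) * (nIdx δ k)
              ≤ ee (-(k : ℝ)) * ((k : ℝ) + ee ((k : ℝ) * (1 - δ)) + 1) :=
                mul_le_mul_of_nonneg_left h4 h6.le
            _ = ((k : ℝ) + 1) * ee (-(k : ℝ)) + ee (-(k : ℝ)) * ee ((k : ℝ) * (1 - δ)) := by
                ring
            _ = ((k : ℝ) + 1) * ee (-(k : ℝ)) + ee (-(k : ℝ) * δ) := by rw [h5]
        -- (a) : 6 * ee (-kδ) ≤ ee (-kb)
        have ha : 6 * ee (-(k : ℝ) * δ) ≤ ee (-(k : ℝ) * b) := by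
          have h7 : (6 : ℝ) ≤ ee ((k : ℝ) * (δ - b)) := by rwa [ee_nat_mul]
          have h8 : 6 * ee (-(k : ℝ) * δ) ≤ ee ((k : ℝ) * (δ - b)) * ee (-(k : ℝ) * δ) :=
            mul_le_mul_of_nonneg_right h7 (ee_nonneg _)
          have h9 : ee ((k : ℝ) * (δ - b)) * ee (-(k : ℝ) * δ) = ee (-(k : ℝ) * b) := by
            rw [← ee_add]; ring_nf
          linarith
        -- (b) : (k+1) * ee(-k) ≤ (1/2) * ee(-kb)
        have hbb : ((k : ℝ) + 1) * ee (-(k : ℝ)) ≤ (1/2) * ee (-(k : ℝ) * b) := by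
          have h10 : ee (-(k : ℝ)) = r ^ k * ee (-(k : ℝ) * b) := by
            rw [hr, ← ee_nat_mul, ← ee_add]; ring_nf
          have h11 : ((k : ℝ) + 1) * r ^ k ≤ 1/2 := hk3.le
          have h12 : (0 : ℝ) ≤ ee (-(k : ℝ) * b) := ee_nonneg _
          calc ((k : ℝ) + 1) * ee (-(k : ℝ))
              = (((k : ℝ) + 1) * r ^ k) * ee (-(k : ℝ) * b) := by rw [h10]; ring
            _ ≤ (1/2) * ee (-(k : ℝ) * b) := mul_le_mul_of_nonneg_right h11 h12
        have h13 : (0 : ℝ) ≤ ee (-(k : ℝ) * δ) := ee_nonneg _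
        rw [th]
        linarith
      -- contradiction with hineq
      have hstrict : half ^ th k b < cf v f (nIdx δ k) * rho k ^ (nIdx δ k) := by
        calc (half ^ th k b : NNReal) = hpow (th k b) := rfl
          _ ≤ hpow (2 * ee (-(k : ℝ) * δ) + ee (-(k : ℝ)) * (nIdx δ k)) := hpow_anti hkey
          _ = hpow (2 * ee (-(k : ℝ) * δ)) * hpow (ee (-(k : ℝ)) * (nIdx δ k)) := hpow_add _ _
          _ < v (x k) * hpow (ee (-(k : ℝ)) * (nIdx δ k)) :=
              mul_lt_mul_of_pos_right (hx1 k) (hpow_pos _)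
          _ = cf v f (nIdx δ k) * rho k ^ (nIdx δ k) := by rw [hcf_idx, rho_pow]
      exact absurd hineq (not_le.mpr hstrict)
    exact (Ultrafilter.compl_mem_iff_notMem.mp hcompl) hS

end PSUC

/-- the formal power series ring `V[[x]]` over a nondiscrete rank-one
valuation ring `V` has a strictly increasing chain of prime ideals indexed by the real
interval `(0,1)`; in particular `V[[x]]` has uncountable Krull dimension. -/
theorem powerSeries_nondiscreteValuationRing_uncountable_chain_of_primes
    (F : Type) [Field F] (v : Valuation F NNReal)
    (hdense : ∀ a b : NNReal, 0 < a → a < b → ∃ x : F, x ≠ 0 ∧ a < v x ∧ v x < b) :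
    ∃ P : Set.Ioo (0 : ℝ) 1 → Ideal (PowerSeries v.integer),
      (∀ l, (P l).IsPrime) ∧
      ∀ l m : Set.Ioo (0 : ℝ) 1, (l : ℝ) < (m : ℝ) → P l < P m := by
  classical
  refine ⟨fun l => PSUC.pIdeal v (l : ℝ), fun l => PSUC.pIdeal_isPrime v _, ?_⟩
  intro l m hlm
  have hle : PSUC.pIdeal v (l : ℝ) ≤ PSUC.pIdeal v (m : ℝ) := PSUC.pIdeal_mono v hlm.le
  set δ : ℝ := ((l : ℝ) + (m : ℝ)) / 2 with hδ
  have hl0 : (0 : ℝ) < (l : ℝ) := l.2.1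
  have hm1 : (m : ℝ) < 1 := m.2.2
  have hδ0 : 0 < δ := by rw [hδ]; linarith
  have hδ1 : δ < 1 := by rw [hδ]; linarith
  obtain ⟨f, hfa, hfb⟩ := PSUC.exists_witness v hdense hδ0 hδ1
  have hf1 : f ∈ PSUC.pIdeal v (m : ℝ) := hfa (m : ℝ) (by rw [hδ]; linarith)
  have hf2 : f ∉ PSUC.pIdeal v (l : ℝ) := hfb (l : ℝ) (by rw [hδ]; linarith)
  apply lt_of_le_of_ne hle
  intro heq
  rw [heq] at hf2
  exact hf2 hf1
end

section
/- Let R be a commutative ring with an ultrametric submultiplicative norm ‖·‖ bounded by 1, and let ρ ∈ (0,1]. Then for all Hahn series f, g ∈ HahnSeries ℝ≥0 R, the Gauss norm of radius ρ is submultiplicative: |f·g|_ρ ≤ |f|_ρ · |g|_ρ. -/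
/-!
For `i` in the support of `f * g`, the coefficient `(f * g)ᵢ` is a nonempty finite sum of products
`f_a g_b` with `a + b = i`, `a ∈ supp f`, `b ∈ supp g`. Since `ρ^i = ρ^a ρ^b`, each weighted term is
bounded by `‖f_a‖ρ^a · ‖g_b‖ρ^b ≤ |f|_ρ |g|_ρ`, and the ultrametric inequality passes this bound to
the sum. The bound `‖·‖ ≤ 1` together with `ρ ≤ 1` keeps the suprema finite.
-/

open scoped NNReal

/-- The Gauss norm of radius `ρ` of a Hahn (Mal'cev–Neumann) series
`f = Σ aᵢ tⁱ ∈ HahnSeries ℝ≥0 R`, with respect to a norm `n` on `R`: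
`|f|_ρ = sup_{i ∈ supp f} n(aᵢ)·ρ^i` (with `|0|_ρ = 0`, since `sSup ∅ = 0` in `ℝ`). -/
noncomputable def gaussNorm {R : Type} [CommRing R] (n : R → ℝ) (ρ : ℝ)
    (f : HahnSeries ℝ≥0 R) : ℝ :=
  sSup ((fun i : ℝ≥0 => n (f.coeff i) * ρ ^ (i : ℝ)) '' f.support)

theorem apply_sum_le_of_forall_le {M ι : Type*} [AddCommMonoid M] {n : M → ℝ}
    (hadd : ∀ a b : M, n (a + b) ≤ max (n a) (n b)) {s : Finset ι} (hs : s.Nonempty)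
    {F : ι → M} {C : ℝ} (h : ∀ x ∈ s, n (F x) ≤ C) : n (∑ x ∈ s, F x) ≤ C :=
  Finset.sum_induction_nonempty F (fun a => n a ≤ C)
    (fun a b ha hb => (hadd a b).trans (max_le ha hb)) hs h

section GaussNorm

variable {R : Type} [CommRing R] {n : R → ℝ} {ρ : ℝ}

theorem gaussNorm_nonneg (hnonneg : ∀ a : R, 0 ≤ n a) (hρ : 0 ≤ ρ) (f : HahnSeries ℝ≥0 R) :
    0 ≤ gaussNorm n ρ f := by
  apply Real.sSup_nonneg
  rintro _ ⟨i, -, rfl⟩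
  exact mul_nonneg (hnonneg _) (Real.rpow_nonneg hρ _)

theorem le_gaussNorm (hbd : ∀ a : R, n a ≤ 1) (hρ : ρ ∈ Set.Icc (0 : ℝ) 1)
    {f : HahnSeries ℝ≥0 R} {i : ℝ≥0} (hi : i ∈ f.support) :
    n (f.coeff i) * ρ ^ (i : ℝ) ≤ gaussNorm n ρ f := by
  have hbdd : BddAbove ((fun i : ℝ≥0 => n (f.coeff i) * ρ ^ (i : ℝ)) '' f.support) := by
    refine ⟨1, ?_⟩
    rintro _ ⟨j, -, rfl⟩
    exact mul_le_one₀ (hbd _) (Real.rpow_nonneg hρ.1 _)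
      (Real.rpow_le_one hρ.1 hρ.2 j.coe_nonneg)
  exact le_csSup hbdd ⟨i, hi, rfl⟩

theorem gaussNorm_le {f : HahnSeries ℝ≥0 R} {C : ℝ} (hC : 0 ≤ C)
    (h : ∀ i ∈ f.support, n (f.coeff i) * ρ ^ (i : ℝ) ≤ C) : gaussNorm n ρ f ≤ C := by
  apply Real.sSup_le _ hC
  rintro _ ⟨i, hi, rfl⟩
  exact h i hi

theorem apply_coeff_mul_coeff_mul_rpow_le (hnonneg : ∀ a : R, 0 ≤ n a)
    (hmul : ∀ a b : R, n (a * b) ≤ n a * n b) (hbd : ∀ a : R, n a ≤ 1)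
    (hρ : ρ ∈ Set.Ioc (0 : ℝ) 1) {f g : HahnSeries ℝ≥0 R} {a b : ℝ≥0}
    (ha : a ∈ f.support) (hb : b ∈ g.support) :
    n (f.coeff a * g.coeff b) * ρ ^ ((a + b : ℝ≥0) : ℝ) ≤ gaussNorm n ρ f * gaussNorm n ρ g := by
  have hρ' : ρ ∈ Set.Icc (0 : ℝ) 1 := Set.Ioc_subset_Icc_self hρ
  calc n (f.coeff a * g.coeff b) * ρ ^ ((a + b : ℝ≥0) : ℝ)
      ≤ n (f.coeff a) * n (g.coeff b) * ρ ^ ((a + b : ℝ≥0) : ℝ) :=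
        mul_le_mul_of_nonneg_right (hmul _ _) (Real.rpow_nonneg hρ'.1 _)
    _ = (n (f.coeff a) * ρ ^ (a : ℝ)) * (n (g.coeff b) * ρ ^ (b : ℝ)) := by
        rw [NNReal.coe_add, Real.rpow_add hρ.1]; ring
    _ ≤ gaussNorm n ρ f * gaussNorm n ρ g :=
        mul_le_mul (le_gaussNorm hbd hρ' ha) (le_gaussNorm hbd hρ' hb)
          (mul_nonneg (hnonneg _) (Real.rpow_nonneg hρ'.1 _)) (gaussNorm_nonneg hnonneg hρ'.1 f)

end GaussNorm

theorem gaussNorm_mul_le_general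
    (R : Type) [CommRing R] (n : R → ℝ)
    (hnonneg : ∀ a : R, 0 ≤ n a)
    (hmul : ∀ a b : R, n (a * b) ≤ n a * n b)
    (hadd : ∀ a b : R, n (a + b) ≤ max (n a) (n b))
    (hbd : ∀ a : R, n a ≤ 1)
    (ρ : ℝ) (hρ : ρ ∈ Set.Ioc (0 : ℝ) 1)
    (f g : HahnSeries ℝ≥0 R) :
    gaussNorm n ρ (f * g) ≤ gaussNorm n ρ f * gaussNorm n ρ g := by
  refine gaussNorm_le (mul_nonneg (gaussNorm_nonneg hnonneg hρ.1.le f)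
    (gaussNorm_nonneg hnonneg hρ.1.le g)) fun i hi => ?_
  have hρi : 0 < ρ ^ (i : ℝ) := Real.rpow_pos_of_pos hρ.1 _
  rw [← le_div_iff₀ hρi, HahnSeries.coeff_mul]
  rw [HahnSeries.mem_support, HahnSeries.coeff_mul] at hi
  refine apply_sum_le_of_forall_le hadd (Finset.nonempty_of_sum_ne_zero hi) ?_
  rintro ⟨a, b⟩ hab
  obtain ⟨ha, hb, rfl⟩ := Finset.mem_antidiagonal.mp hab
  rw [le_div_iff₀ hρi]
  exact apply_coeff_mul_coeff_mul_rpow_le hnonneg hmul hbd hρ ha hb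

/-- the Gauss norm of radius `ρ ∈ (0,1]` on the Mal'cev–Neumann series ring
`HahnSeries ℝ≥0 R`, over a commutative ring `R` with an ultrametric submultiplicative norm
bounded by `1`, is submultiplicative. -/
theorem gaussNorm_mul_le
    (R : Type) [CommRing R] (n : R → ℝ)
    (hnonneg : ∀ a : R, 0 ≤ n a)
    (hzero : ∀ a : R, n a = 0 ↔ a = 0)
    (hmul : ∀ a b : R, n (a * b) ≤ n a * n b)
    (hadd : ∀ a b : R, n (a + b) ≤ max (n a) (n b))
    (hbd : ∀ a : R, n a ≤ 1)
    (ρ : ℝ) (hρ : ρ ∈ Set.Ioc (0 : ℝ) 1)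
    (f g : HahnSeries ℝ≥0 R) :
    gaussNorm n ρ (f * g) ≤ gaussNorm n ρ f * gaussNorm n ρ g :=
  gaussNorm_mul_le_general R n hnonneg hmul hadd hbd ρ hρ f g
end

section
/- (Bar Lemma) Let R be a commutative ring with an ultrametric norm ‖·‖ bounded by 1, fix ρ ∈ (0,1], and let f ∈ HahnSeries ℝ≥0 R be nonzero. Then for every ε > 0 there exists δ > 0 such that every index j in the support of f with j ≤ argnorm f − ε satisfies ‖f.coeff j‖·ρ^j ≤ |f|_ρ − δ. -/
open scoped NNReal

/-- The `argnorm` of a Hahn series `f`: the least index `i` at which the Gauss norm of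
`f` is attained, or approached along a sequence of indices in the support of `f`
(`sInf` of the set of such indices; the infimum is attained by well-orderedness). -/
noncomputable def argnorm {R : Type} [CommRing R] (n : R → ℝ) (ρ : ℝ)
    (f : HahnSeries ℝ≥0 R) : ℝ≥0 :=
  sInf {i : ℝ≥0 |
    n (f.coeff i) * ρ ^ (i : ℝ) = gaussNorm n ρ f ∨
    ∃ x : ℕ → ℝ≥0, (∀ k, x k ∈ f.support) ∧
      Filter.Tendsto x Filter.atTop (nhds i) ∧
      Filter.Tendsto (fun k => n (f.coeff (x k)) * ρ ^ ((x k : ℝ))) Filter.atTop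
        (nhds (gaussNorm n ρ f))}

open Filter Set Topology

/-!
If the terms of index at most `argnorm f - ε` came arbitrarily close to `|f|_ρ`, then, as these
indices lie in the compact interval `[0, argnorm f - ε]`, a subsequence of them would converge to
some `i ≤ argnorm f - ε` along which `|f|_ρ` is approached; such an `i` belongs to the set whose
infimum is `argnorm f`, which is absurd.
-/

theorem IsCompact.exists_seq_tendsto_sSup_image {X : Type*} [TopologicalSpace X]
    [FirstCountableTopology X] {K T : Set X} (hK : IsCompact K) (hTK : T ⊆ K) (hT : T.Nonempty)
    {g : X → ℝ} (hg : BddAbove (g '' T)) :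
    ∃ i ∈ K, ∃ x : ℕ → X, (∀ k, x k ∈ T) ∧ Tendsto x atTop (𝓝 i) ∧
      Tendsto (g ∘ x) atTop (𝓝 (sSup (g '' T))) := by
  obtain ⟨u, -, hu, huT⟩ := exists_seq_tendsto_sSup (hT.image g) hg
  choose x hxT hgx using huT
  obtain ⟨i, hiK, φ, hφ, hxi⟩ := hK.tendsto_subseq fun k => hTK (hxT k)
  refine ⟨i, hiK, x ∘ φ, fun k => hxT (φ k), hxi, ?_⟩
  rw [← Function.comp_assoc, show g ∘ x = u from funext hgx]
  exact hu.comp hφ.tendsto_atTop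

section GaussNorm

variable {R : Type} [CommRing R] {n : R → ℝ} {ρ : ℝ} {f : HahnSeries ℝ≥0 R}

noncomputable def gaussTerm (n : R → ℝ) (ρ : ℝ) (f : HahnSeries ℝ≥0 R) (i : ℝ≥0) : ℝ :=
  n (f.coeff i) * ρ ^ (i : ℝ)

theorem gaussTerm_le_one (hbd : ∀ a : R, n a ≤ 1) (hρ₀ : 0 ≤ ρ) (hρ₁ : ρ ≤ 1) (i : ℝ≥0) :
    gaussTerm n ρ f i ≤ 1 :=
  mul_le_one₀ (hbd _) (Real.rpow_nonneg hρ₀ _) (Real.rpow_le_one hρ₀ hρ₁ i.coe_nonneg)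

theorem bddAbove_gaussTerm_image (hbd : ∀ a : R, n a ≤ 1) (hρ₀ : 0 ≤ ρ) (hρ₁ : ρ ≤ 1)
    (s : Set ℝ≥0) : BddAbove (gaussTerm n ρ f '' s) :=
  ⟨1, by rintro _ ⟨i, -, rfl⟩; exact gaussTerm_le_one hbd hρ₀ hρ₁ i⟩

theorem argnorm_le_of_tendsto {i : ℝ≥0} {x : ℕ → ℝ≥0} (hx : ∀ k, x k ∈ f.support)
    (hxi : Tendsto x atTop (𝓝 i))
    (hnorm : Tendsto (gaussTerm n ρ f ∘ x) atTop (𝓝 (gaussNorm n ρ f))) :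
    argnorm n ρ f ≤ i :=
  csInf_le (OrderBot.bddBelow _) (Or.inr ⟨x, hx, hxi, hnorm⟩)

theorem sSup_gaussTerm_image_lt_gaussNorm (hbd : ∀ a : R, n a ≤ 1) (hρ₀ : 0 ≤ ρ)
    (hρ₁ : ρ ≤ 1) {T : Set ℝ≥0} (hTf : T ⊆ f.support) (hT : T.Nonempty) {a : ℝ}
    (hTa : ∀ j ∈ T, (j : ℝ) ≤ a) (ha : a < argnorm n ρ f) :
    sSup (gaussTerm n ρ f '' T) < gaussNorm n ρ f := by
  have hbdd := bddAbove_gaussTerm_image (f := f) hbd hρ₀ hρ₁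
  have hle : sSup (gaussTerm n ρ f '' T) ≤ gaussNorm n ρ f :=
    csSup_le_csSup (hbdd _) (hT.image _) (image_mono hTf)
  refine hle.lt_of_ne fun heq => ?_
  have hK : IsCompact (((↑) : ℝ≥0 → ℝ) ⁻¹' Icc 0 a) :=
    NNReal.isClosedEmbedding_coe.isCompact_preimage isCompact_Icc
  obtain ⟨i, hiK, x, hxT, hxi, hnorm⟩ :=
    hK.exists_seq_tendsto_sSup_image (fun j hj => ⟨j.coe_nonneg, hTa j hj⟩) hT (hbdd T)
  have hi : argnorm n ρ f ≤ i := argnorm_le_of_tendsto (fun k => hTf (hxT k)) hxi (heq ▸ hnorm)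
  exact ha.not_ge ((NNReal.coe_le_coe.2 hi).trans hiK.2)

end GaussNorm

theorem gaussNorm_bar_lemma_general
    (R : Type) [CommRing R] (n : R → ℝ)
    (hbd : ∀ a : R, n a ≤ 1)
    (ρ : ℝ) (hρ : ρ ∈ Set.Ioc (0 : ℝ) 1)
    (f : HahnSeries ℝ≥0 R) :
    ∀ ε : ℝ, 0 < ε → ∃ δ : ℝ, 0 < δ ∧
      ∀ j ∈ f.support, (j : ℝ) ≤ (argnorm n ρ f : ℝ) - ε →
        n (f.coeff j) * ρ ^ (j : ℝ) ≤ gaussNorm n ρ f - δ := by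
  intro ε hε
  set T := {j ∈ f.support | (j : ℝ) ≤ argnorm n ρ f - ε}
  rcases T.eq_empty_or_nonempty with hT | hT
  · exact ⟨1, one_pos, fun j hj hjε => (hT.subset ⟨hj, hjε⟩).elim⟩
  have hlt := sSup_gaussTerm_image_lt_gaussNorm hbd hρ.1.le hρ.2 (sep_subset _ _) hT
    (fun j hj => hj.2) (by linarith)
  refine ⟨_, sub_pos.2 hlt, fun j hj hjε => ?_⟩
  rw [sub_sub_cancel]
  exact le_csSup (bddAbove_gaussTerm_image hbd hρ.1.le hρ.2 T) ⟨j, ⟨hj, hjε⟩, rfl⟩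

/-- Bar Lemma: for a nonzero Mal'cev–Neumann series
`f ∈ HahnSeries ℝ≥0 R` over a commutative ring `R` with an ultrametric norm bounded by
`1`, and `ρ ∈ (0,1]`: for every `ε > 0`, the terms of `f` of index at most
`argnorm f − ε` have Gauss norm bounded away from `|f|_ρ`. -/
theorem gaussNorm_bar_lemma
    (R : Type) [CommRing R] (n : R → ℝ)
    (hnonneg : ∀ a : R, 0 ≤ n a)
    (hzero : ∀ a : R, n a = 0 ↔ a = 0)
    (hmul : ∀ a b : R, n (a * b) ≤ n a * n b)
    (hadd : ∀ a b : R, n (a + b) ≤ max (n a) (n b))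
    (hbd : ∀ a : R, n a ≤ 1)
    (ρ : ℝ) (hρ : ρ ∈ Set.Ioc (0 : ℝ) 1)
    (f : HahnSeries ℝ≥0 R) (hf : f ≠ 0) :
    ∀ ε : ℝ, 0 < ε → ∃ δ : ℝ, 0 < δ ∧
      ∀ j ∈ f.support, (j : ℝ) ≤ (argnorm n ρ f : ℝ) - ε →
        n (f.coeff j) * ρ ^ (j : ℝ) ≤ gaussNorm n ρ f - δ :=
  gaussNorm_bar_lemma_general R n hbd ρ hρ f
end

section
/- Let S be a nonempty set of points (i, y) with i ∈ ℝ, i ≥ 0 and y ∈ ℝ, y ≥ 0. Let N : {x : ℝ // 0 ≤ x} → ℝ be a nonincreasing convex function with N(i) ≤ y for all (i, y) ∈ S, which is the greatest such function: every nonincreasing convex M : {x : ℝ // 0 ≤ x} → ℝ with M(i) ≤ y for all (i, y) ∈ S satisfies M ≤ N pointwise. Then for every real s > 0, the infimal Legendre transform of N at s equals the infimum over the points: ⨅_{x ≥ 0} (N(x) + s·x) = ⨅_{(i,y) ∈ S} (y + s·i). -/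
/-!
Let `c` be the infimum of `y + s·i` over `(i, y) ∈ S`. The affine function `x ↦ c - s·x` is
convex, nonincreasing (as `s ≥ 0`) and lies below every point of `S`, so maximality of `N`
gives `c - s·x ≤ N x`, i.e. `c` is a lower bound of the Legendre values `N x + s·x`.
Conversely `N i + s·i ≤ y + s·i` at every point, so no larger lower bound exists.
-/

open Set

def IsConvexAntitoneMinorant (S : Set (ℝ × ℝ)) (M : ℝ → ℝ) : Prop :=
  ConvexOn ℝ (Ici 0) M ∧ AntitoneOn M (Ici 0) ∧ ∀ q ∈ S, M q.1 ≤ q.2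

lemma isConvexAntitoneMinorant_const_sub_mul {S : Set (ℝ × ℝ)} {c s : ℝ} (hs : 0 ≤ s)
    (hc : ∀ q ∈ S, c ≤ q.2 + s * q.1) :
    IsConvexAntitoneMinorant S fun x => c - s * x := by
  refine ⟨?_, fun a _ b _ hab => sub_le_sub_left (mul_le_mul_of_nonneg_left hab hs) c,
    fun q hq => by linarith [hc q hq]⟩
  exact (convexOn_const c (convex_Ici 0)).sub ((LinearMap.mul ℝ ℝ s).concaveOn (convex_Ici 0))

lemma le_add_mul_of_forall_minorant_le {S : Set (ℝ × ℝ)} {N : ℝ → ℝ}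
    (hgreatest : ∀ M, IsConvexAntitoneMinorant S M → ∀ x ∈ Ici (0 : ℝ), M x ≤ N x)
    {c s : ℝ} (hs : 0 ≤ s) (hc : ∀ q ∈ S, c ≤ q.2 + s * q.1) {x : ℝ} (hx : 0 ≤ x) :
    c ≤ N x + s * x := by
  have := hgreatest _ (isConvexAntitoneMinorant_const_sub_mul hs hc) x hx
  linarith

theorem legendre_of_newtonPolygon_eq_inf_over_points_general
    (S : Set (ℝ × ℝ)) (hS : S.Nonempty)
    (hSnn : ∀ q ∈ S, 0 ≤ q.1 ∧ 0 ≤ q.2)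
    (N : ℝ → ℝ)
    (hle : ∀ q ∈ S, N q.1 ≤ q.2)
    (hgreatest : ∀ M : ℝ → ℝ, ConvexOn ℝ (Set.Ici (0 : ℝ)) M →
      AntitoneOn M (Set.Ici (0 : ℝ)) → (∀ q ∈ S, M q.1 ≤ q.2) →
      ∀ x ∈ Set.Ici (0 : ℝ), M x ≤ N x)
    (s : ℝ) (hs : 0 < s) :
    sInf ((fun x : ℝ => N x + s * x) '' Set.Ici (0 : ℝ)) =
      sInf ((fun q : ℝ × ℝ => q.2 + s * q.1) '' S) := by
  set c := sInf ((fun q : ℝ × ℝ => q.2 + s * q.1) '' S)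
  have hbdd : BddBelow ((fun q : ℝ × ℝ => q.2 + s * q.1) '' S) := by
    refine ⟨0, ?_⟩
    rintro _ ⟨q, hq, rfl⟩
    obtain ⟨hi, hy⟩ := hSnn q hq
    positivity
  have hc : ∀ q ∈ S, c ≤ q.2 + s * q.1 := fun q hq => csInf_le hbdd ⟨q, hq, rfl⟩
  refine IsGLB.csInf_eq ⟨?_, fun l hl => le_csInf (hS.image _) ?_⟩ (nonempty_Ici.image _)
  · rintro _ ⟨x, hx, rfl⟩
    exact le_add_mul_of_forall_minorant_le (fun M hM => hgreatest M hM.1 hM.2.1 hM.2.2)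
      hs.le hc hx
  · rintro _ ⟨q, hq, rfl⟩
    exact (hl ⟨q.1, (hSnn q hq).1, rfl⟩).trans (by linarith [hle q hq])

/-- if `N` is the nonincreasing lower convex envelope (Newton polygon) of a
nonempty set `S` of points `(i, y)` with `i, y ≥ 0`, then for every `s > 0` the infimal
Legendre transform of `N` at `s` equals the infimum of `y + s·i` over the points
`(i, y) ∈ S`. -/
theorem legendre_of_newtonPolygon_eq_inf_over_points
    (S : Set (ℝ × ℝ)) (hS : S.Nonempty)
    (hSnn : ∀ q ∈ S, 0 ≤ q.1 ∧ 0 ≤ q.2)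
    (N : ℝ → ℝ)
    (hconv : ConvexOn ℝ (Set.Ici (0 : ℝ)) N)
    (hanti : AntitoneOn N (Set.Ici (0 : ℝ)))
    (hle : ∀ q ∈ S, N q.1 ≤ q.2)
    (hgreatest : ∀ M : ℝ → ℝ, ConvexOn ℝ (Set.Ici (0 : ℝ)) M →
      AntitoneOn M (Set.Ici (0 : ℝ)) → (∀ q ∈ S, M q.1 ≤ q.2) →
      ∀ x ∈ Set.Ici (0 : ℝ), M x ≤ N x)
    (s : ℝ) (hs : 0 < s) :
    sInf ((fun x : ℝ => N x + s * x) '' Set.Ici (0 : ℝ)) =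
      sInf ((fun q : ℝ × ℝ => q.2 + s * q.1) '' S) :=
  legendre_of_newtonPolygon_eq_inf_over_points_general S hS hSnn N hle hgreatest s hs
end

section
/- Let k be a field and fix μ ∈ (0,1). Let R be the Puiseux series ring over k — the subring of HahnSeries ℚ≥0 k consisting of series whose support is contained in (1/n)·ℕ for some positive integer n — equipped with the multiplicative ultrametric norm ‖g‖ = μ^{ord g} for g ≠ 0 (where ord g is the least element of the support of g) and ‖0‖ = 0. Then for every ρ ∈ (0,1) there exists a nonzero Hahn series f ∈ HahnSeries ℝ≥0 R whose Gauss norm of radius ρ is a supremum that is not attained: for every i ∈ ℝ≥0 one has ‖f.coeff i‖·ρ^i < |f|_ρ, where |f|_ρ = sup_{i ∈ supp f} ‖f.coeff i‖·ρ^i. -/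
open scoped NNReal NNRat

set_option synthInstance.maxHeartbeats 1000000
set_option maxHeartbeats 1000000

/-- The Puiseux series ring `k[[x^{1/ℕ}]]`: the subring of the Hahn series ring
`HahnSeries ℚ≥0 k` consisting of series whose support lies in `(1/n)·ℕ` for some `n ≥ 1`. -/
def puiseuxSubring (k : Type) [CommRing k] : Subring (HahnSeries ℚ≥0 k) where
  carrier := {f | ∃ n : ℕ, 0 < n ∧ ∀ q ∈ f.support, ∃ m : ℕ, q * (n : ℚ≥0) = (m : ℚ≥0)}
  zero_mem' := ⟨1, one_pos, by simp [HahnSeries.support]⟩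
  one_mem' := by
    refine ⟨1, one_pos, fun q hq => ⟨0, ?_⟩⟩
    have hq' : (1 : HahnSeries ℚ≥0 k).coeff q ≠ 0 := hq
    rw [HahnSeries.coeff_one] at hq'
    have : q = 0 := by
      by_contra h
      simp [h] at hq'
    simp [this]
  add_mem' := by
    rintro f g ⟨n, hn, h⟩ ⟨n', hn', h'⟩
    refine ⟨n * n', Nat.mul_pos hn hn', fun q hq => ?_⟩
    rcases HahnSeries.support_add_subset _ _ hq with hf | hg
    · obtain ⟨m, hm⟩ := h q hf
      exact ⟨m * n', by push_cast; rw [← hm]; ring⟩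
    · obtain ⟨m, hm⟩ := h' q hg
      exact ⟨m * n, by push_cast; rw [← hm]; ring⟩
  mul_mem' := by
    rintro f g ⟨n, hn, h⟩ ⟨n', hn', h'⟩
    refine ⟨n * n', Nat.mul_pos hn hn', fun q hq => ?_⟩
    obtain ⟨a, ha, b, hb, rfl⟩ := HahnSeries.support_mul_subset hq
    obtain ⟨m1, hm1⟩ := h a ha
    obtain ⟨m2, hm2⟩ := h' b hb
    exact ⟨m1 * n' + m2 * n, by push_cast; rw [← hm1, ← hm2]; ring⟩
  neg_mem' := by
    rintro f ⟨n, hn, h⟩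
    exact ⟨n, hn, fun q hq => h q (by rwa [HahnSeries.support_neg] at hq)⟩

open Classical

/-- The `x`-adic norm `‖g‖ = μ^{ord g}` (and `‖0‖ = 0`) on the Puiseux series
ring over a field `k`, where `ord g` is the least element of the support of `g`. -/
noncomputable def puiseuxNorm (k : Type) [Field k] (μ : ℝ) (g : puiseuxSubring k) : ℝ :=
  if (g : HahnSeries ℚ≥0 k) = 0 then 0
  else μ ^ ((((g : HahnSeries ℚ≥0 k).order : ℚ≥0) : ℝ))

/-- over the Puiseux series ring `R = k[[x^{1/ℕ}]]` with the `x`-adic norm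
`‖g‖ = μ^{ord g}` (`μ ∈ (0,1)`), for every radius `ρ ∈ (0,1)` there is a nonzero Hahn
series `f ∈ HahnSeries ℝ≥0 R` whose Gauss norm of radius `ρ` is a supremum that is not
attained at any index. -/
theorem gaussNorm_not_attained_exists
    (k : Type) [Field k] (μ : ℝ) (hμ : μ ∈ Set.Ioo (0 : ℝ) 1)
    (ρ : ℝ) (hρ : ρ ∈ Set.Ioo (0 : ℝ) 1) :
    ∃ f : HahnSeries ℝ≥0 (puiseuxSubring k), f ≠ 0 ∧
      ∀ i : ℝ≥0,
        puiseuxNorm k μ (f.coeff i) * ρ ^ (i : ℝ) <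
          gaussNorm (puiseuxNorm k μ) ρ f := by
  classical
  obtain ⟨hμ0, hμ1⟩ := hμ
  obtain ⟨hρ0, hρ1⟩ := hρ
  have hlogμ : Real.log μ < 0 := Real.log_neg hμ0 hμ1
  have hlogρ : Real.log ρ < 0 := Real.log_neg hρ0 hρ1
  set c : ℝ := Real.log ρ / Real.log μ with hc
  have hcpos : 0 < c := div_pos_of_neg_of_neg hlogρ hlogμ
  set ε : ℕ → ℝ := fun n => 1 / ((n : ℝ) + 1) with hε
  have hεpos : ∀ n, 0 < ε n := fun n => by positivity
  have hεle1 : ∀ n, ε n ≤ 1 := fun n => by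
    rw [hε]
    rw [div_le_one (by positivity)]
    have : (0:ℝ) ≤ (n:ℝ) := Nat.cast_nonneg n
    linarith
  have hex : ∀ n : ℕ, ∃ q : ℚ, c * ε n < (q : ℝ) ∧ (q : ℝ) < c * ε n + ε n ^ 2 :=
    fun n => exists_rat_btwn (lt_add_of_pos_right _ (by positivity))
  choose qr hq1 hq2 using hex
  have hqpos : ∀ n, (0 : ℝ) < (qr n : ℝ) := fun n =>
    lt_trans (by positivity) (hq1 n)
  have hqnn : ∀ n, (0 : ℚ) ≤ qr n := fun n => by exact_mod_cast (hqpos n).le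
  set Q : ℕ → ℚ≥0 := fun n => ⟨qr n, hqnn n⟩ with hQ
  have hQcast : ∀ n, ((Q n : ℚ≥0) : ℝ) = (qr n : ℝ) := fun n => by
    rw [hQ]; norm_cast
  -- coefficients
  have hmem : ∀ n, (HahnSeries.single (Q n) (1 : k)) ∈ puiseuxSubring k := by
    intro n
    refine ⟨(Q n).den, (Q n).den_pos, fun q hq => ?_⟩
    have hqQ : q = Q n := HahnSeries.support_single_subset hq
    exact ⟨(Q n).num, by
      rw [hqQ]
      exact_mod_cast NNRat.mul_den_eq_num (Q n)⟩
  set a : ℕ → puiseuxSubring k := fun n => ⟨HahnSeries.single (Q n) 1, hmem n⟩ with ha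
  have hane : ∀ n, ((a n : puiseuxSubring k) : HahnSeries ℚ≥0 k) ≠ 0 := fun n =>
    HahnSeries.single_ne_zero one_ne_zero
  have hnorm : ∀ n, puiseuxNorm k μ (a n) = μ ^ ((qr n : ℝ)) := by
    intro n
    rw [puiseuxNorm, if_neg (hane n)]
    have hord : ((a n : puiseuxSubring k) : HahnSeries ℚ≥0 k).order = Q n :=
      HahnSeries.order_single one_ne_zero
    rw [hord, hQcast]
  -- indices
  have hurnn : ∀ n, (0 : ℝ) ≤ 1 - ε n := fun n => by linarith [hεle1 n]
  set u : ℕ → ℝ≥0 := fun n => ⟨1 - ε n, hurnn n⟩ with hu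
  have hucast : ∀ n, ((u n : ℝ≥0) : ℝ) = 1 - ε n := fun n => rfl
  have hεanti : StrictAnti ε := by
    intro m n hmn
    rw [hε]
    apply div_lt_div_of_pos_left one_pos (by positivity)
    have : (m : ℝ) < (n : ℝ) := by exact_mod_cast hmn
    linarith
  have humono : StrictMono u := by
    intro m n hmn
    rw [← NNReal.coe_lt_coe, hucast, hucast]
    have := hεanti hmn
    linarith
  have huinj : Function.Injective u := humono.injective
  -- the Hahn series
  set g : ℝ≥0 → puiseuxSubring k :=
    fun i => if h : ∃ n, u n = i then a h.choose else 0 with hg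
  have hgsupp : Function.support g ⊆ Set.range u := by
    intro i hi
    by_contra hcon
    apply hi
    rw [hg]
    exact dif_neg (by simpa [Set.mem_range] using hcon)
  have hrange : (Set.range u).IsPWO := by
    rw [← Set.image_univ]
    exact ((Set.isWF_univ_iff.mpr ⟨wellFounded_lt (α := ℕ)⟩).isPWO).image_of_monotone humono.monotone
  have hpwo : (Function.support g).IsPWO := hrange.mono hgsupp
  set f : HahnSeries ℝ≥0 (puiseuxSubring k) := ⟨g, hpwo⟩ with hf
  have hfcoeff : ∀ i, f.coeff i = g i := fun i => rfl
  have hcoeff : ∀ n, f.coeff (u n) = a n := by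
    intro n
    have hx : ∃ m, u m = u n := ⟨n, rfl⟩
    rw [hfcoeff, hg]
    show (if h : ∃ m, u m = u n then a h.choose else 0) = a n
    rw [dif_pos hx]
    congr 1
    exact huinj hx.choose_spec
  have hcoeff0 : ∀ i, i ∉ Set.range u → f.coeff i = 0 := by
    intro i hi
    rw [hfcoeff, hg]
    exact dif_neg (by simpa [Set.mem_range] using hi)
  have hfne : f ≠ 0 := by
    intro h0
    apply hane 0
    have h1 : f.coeff (u 0) = a 0 := hcoeff 0
    rw [h0] at h1
    simp only [HahnSeries.coeff_zero] at h1
    rw [← h1]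
    simp
  -- the values
  set v : ℕ → ℝ := fun n => μ ^ ((qr n : ℝ)) * ρ ^ ((1 : ℝ) - ε n) with hv
  have hvlt : ∀ n, v n < ρ := by
    intro n
    have h1 : μ ^ ((qr n : ℝ)) < ρ ^ (ε n) := by
      rw [Real.rpow_def_of_pos hμ0, Real.rpow_def_of_pos hρ0]
      apply Real.exp_lt_exp.mpr
      have heq : c * ε n * Real.log μ = Real.log ρ * ε n := by
        rw [hc]
        field_simp [hlogμ.ne]
      calc Real.log μ * (qr n : ℝ) = (qr n : ℝ) * Real.log μ := mul_comm _ _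
        _ < c * ε n * Real.log μ := mul_lt_mul_of_neg_right (hq1 n) hlogμ
        _ = Real.log ρ * ε n := heq
    have h2 : ρ ^ (ε n) * ρ ^ ((1 : ℝ) - ε n) = ρ := by
      rw [← Real.rpow_add hρ0]
      norm_num
    calc v n = μ ^ ((qr n : ℝ)) * ρ ^ ((1 : ℝ) - ε n) := rfl
      _ < ρ ^ (ε n) * ρ ^ ((1 : ℝ) - ε n) :=
          mul_lt_mul_of_pos_right h1 (Real.rpow_pos_of_pos hρ0 _)
      _ = ρ := h2
  -- the limit
  have hε0 : Filter.Tendsto ε Filter.atTop (nhds 0) := by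
    rw [hε]
    exact tendsto_one_div_add_atTop_nhds_zero_nat
  have hq0 : Filter.Tendsto (fun n => ((qr n : ℝ))) Filter.atTop (nhds 0) := by
    apply squeeze_zero (fun n => (hqpos n).le) (fun n => (hq2 n).le)
    have := (hε0.const_mul c).add ((hε0.pow 2))
    simpa [hε, one_div] using this
  have t1 : Filter.Tendsto (fun n => μ ^ ((qr n : ℝ))) Filter.atTop (nhds 1) := by
    have := (Real.continuousAt_const_rpow (ne_of_gt hμ0)).tendsto.comp hq0
    simpa [Function.comp_def, Real.rpow_zero] using this
  have t2 : Filter.Tendsto (fun n => ρ ^ ((1 : ℝ) - ε n)) Filter.atTop (nhds ρ) := by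
    have h3 : Filter.Tendsto (fun n => (1 : ℝ) - ε n) Filter.atTop (nhds 1) := by
      have hone : Filter.Tendsto (fun _ : ℕ => (1:ℝ)) Filter.atTop (nhds 1) :=
        tendsto_const_nhds
      simpa using hone.sub hε0
    have := (Real.continuousAt_const_rpow (ne_of_gt hρ0)).tendsto.comp h3
    simpa [Function.comp_def, Real.rpow_one] using this
  have hvρ : Filter.Tendsto v Filter.atTop (nhds ρ) := by
    have := t1.mul t2
    simpa [hv] using this
  -- support and image
  have hsupp : f.support = Set.range u := by
    ext i
    constructor
    · intro hi
      by_contra hcon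
      exact hi (hcoeff0 i hcon)
    · rintro ⟨n, rfl⟩
      rw [HahnSeries.mem_support, hcoeff n]
      intro h
      apply hane n
      rw [h]
      simp
  have hS : (fun i : ℝ≥0 => puiseuxNorm k μ (f.coeff i) * ρ ^ ((i : ℝ))) '' f.support
      = Set.range v := by
    have hcomp : (fun i : ℝ≥0 => puiseuxNorm k μ (f.coeff i) * ρ ^ ((i : ℝ))) ∘ u = v := by
      funext n
      show puiseuxNorm k μ (f.coeff (u n)) * ρ ^ (((u n : ℝ≥0)) : ℝ) = v n
      rw [hcoeff n, hnorm n]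
      rfl
    rw [hsupp, ← Set.range_comp, hcomp]
  have hgauss : gaussNorm (puiseuxNorm k μ) ρ f = sSup (Set.range v) := by
    rw [gaussNorm, hS]
  have hbdd : BddAbove (Set.range v) := by
    refine ⟨ρ, ?_⟩
    rintro x ⟨n, rfl⟩
    exact (hvlt n).le
  have hsup : sSup (Set.range v) = ρ := by
    apply le_antisymm
    · apply csSup_le (Set.range_nonempty v)
      rintro x ⟨n, rfl⟩
      exact (hvlt n).le
    · exact le_of_tendsto hvρ (Filter.Eventually.of_forall fun n => le_csSup hbdd ⟨n, rfl⟩)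
  refine ⟨f, hfne, fun i => ?_⟩
  rw [hgauss, hsup]
  by_cases hi : i ∈ Set.range u
  · obtain ⟨n, rfl⟩ := hi
    rw [hcoeff n, hnorm n]
    exact hvlt n
  · rw [hcoeff0 i hi]
    have h0 : puiseuxNorm k μ 0 = 0 := by
      rw [puiseuxNorm, if_pos]
      simp
    rw [h0, zero_mul]
    exact hρ0
end
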